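/- arXiv:2605.01274 — 7 statements merged into one kernel-verified Lean document; each statement's English description precedes it below -/
import Mathlib

section
/- Let f₁, g₁ : (−∞,0] → ℂ and f₂, g₂ : [0,∞) → ℂ be continuously differentiable with f₁(0) = f₂(0), f₁′(0) = f₂′(0), g₁(0) = g₂(0), g₁′(0) = g₂′(0), and suppose f₁, g₁ together with their first derivatives tend to 0 as x → −∞ while f₂, g₂ together with their first derivatives tend to 0 as x → +∞. Define, for x ≤ 0 and t ≥ 0: Ψ₁⁽¹⁾(x,t) = f₁(x−t); Ψ₂⁽¹⁾(x,t) = g₁(x+t) if x+t ≤ 0 and Ψ₂⁽¹⁾(x,t) = g₂(x+t) if x+t > 0; and, for x ≥ 0 and t ≥ 0: Ψ₁⁽²⁾(x,t) = f₂(x−t) if x ≥ t and Ψ₁⁽²⁾(x,t) = f₁(x−t) if x < t; Ψ₂⁽²⁾(x,t) = g₂(x+t). Then these four functions are continuously differentiable and solve the massless Dirac interface problem on two semi-infinite domains with initial data Ψ₁⁽¹⁾(·,0) = f₁, Ψ₂⁽¹⁾(·,0) = g₁, Ψ₁⁽²⁾(·,0) = f₂, Ψ₂⁽²⁾(·,0)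 = g₂; in particular they satisfy the two transport equations on their respective domains, the interface continuity conditions at x = 0, and the decay conditions (of the functions and their first x- and t-derivatives) as x → ∓∞. -/
/-!
Every component is a travelling wave `φ (x ∓ t)`: `Ψ₁⁽¹⁾ = f₁(x - t)`, `Ψ₂⁽²⁾ = g₂(x + t)`,
while `Ψ₂⁽¹⁾` and `Ψ₁⁽²⁾` are waves of the profiles obtained by gluing `g₁` to `g₂` and
`f₁` to `f₂` at `0`. The compatibility conditions at `0` make the glued profiles `C¹` on all
of `ℝ`. A wave of any profile satisfies the transport equation `∂ₜΨ = ∓∂ₓΨ` (the chain rule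
for an affine change of variables needs no differentiability), and it decays together with
its derivatives as soon as its profile does.
-/

open Filter Set Topology

section Glue

variable {E : Type*} {a b : ℝ → E}

noncomputable def glue (a b : ℝ → E) : ℝ → E := fun y => if y ≤ 0 then a y else b y

theorem glue_eqOn_Iic : EqOn (glue a b) a (Iic 0) := fun _ hy => if_pos hy

theorem glue_eqOn_Ici (h0 : a 0 = b 0) : EqOn (glue a b) b (Ici 0) := by
  intro y hy
  rcases (mem_Ici.mp hy).eq_or_lt with rfl | hy
  · exact (glue_eqOn_Iic self_mem_Iic).trans h0
  · exact if_neg (not_le.mpr hy)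

variable [NormedAddCommGroup E] [NormedSpace ℝ E] {a' b' : ℝ → E}

theorem hasDerivAt_glue (ha : ∀ y ≤ 0, HasDerivWithinAt a (a' y) (Iic 0) y)
    (hb : ∀ y ≥ 0, HasDerivWithinAt b (b' y) (Ici 0) y) (h0 : a 0 = b 0) (h0' : a' 0 = b' 0)
    (y : ℝ) : HasDerivAt (glue a b) (glue a' b' y) y := by
  have hIic : HasDerivWithinAt (glue a b) (glue a' b' y) (Iic 0) y := by
    rcases le_or_gt y 0 with hy | hy
    · rw [glue_eqOn_Iic hy]
      exact (ha y hy).congr_of_mem (fun _ hz => glue_eqOn_Iic hz) hy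
    · refine HasFDerivWithinAt.of_notMem_closure ?_
      simpa using hy
  have hIci : HasDerivWithinAt (glue a b) (glue a' b' y) (Ici 0) y := by
    rcases le_or_gt 0 y with hy | hy
    · rw [glue_eqOn_Ici h0' hy]
      exact (hb y hy).congr_of_mem (fun _ hz => glue_eqOn_Ici h0 hz) hy
    · refine HasFDerivWithinAt.of_notMem_closure ?_
      simpa using hy
  simpa [Iic_union_Ici] using hIic.union hIci

theorem contDiff_one_glue (ha : ContDiffOn ℝ 1 a (Iic 0)) (hb : ContDiffOn ℝ 1 b (Ici 0))
    (h0 : a 0 = b 0) (h0' : derivWithin a (Iic 0) 0 = derivWithin b (Ici 0) 0) :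
    ContDiff ℝ 1 (glue a b) := by
  have hderiv := hasDerivAt_glue
    (fun y hy => (ha.differentiableOn one_ne_zero y hy).hasDerivWithinAt)
    (fun y hy => (hb.differentiableOn one_ne_zero y hy).hasDerivWithinAt) h0 h0'
  rw [contDiff_one_iff_deriv, funext fun y => (hderiv y).deriv]
  exact ⟨fun y => (hderiv y).differentiableAt,
    continuous_if_le continuous_id continuous_const
      (ha.continuousOn_derivWithin (uniqueDiffOn_Iic 0) le_rfl)
      (hb.continuousOn_derivWithin (uniqueDiffOn_Ici 0) le_rfl) fun _ hy => hy ▸ h0'⟩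

end Glue

section Decay

variable {E : Type*} [NormedAddCommGroup E] [NormedSpace ℝ E] {φ a : ℝ → E}

theorem deriv_eq_derivWithin_of_eqOn {s : Set ℝ} {x : ℝ} (h : EqOn φ a s) (hs : s ∈ 𝓝 x) :
    deriv φ x = derivWithin a s x := by
  rw [derivWithin_of_mem_nhds hs]
  exact (eventuallyEq_of_mem hs h).deriv_eq

theorem tendsto_deriv_atBot_of_eqOn_Iic {b : ℝ} {l : Filter E} (h : EqOn φ a (Iic b))
    (ha : Tendsto (derivWithin a (Iic b)) atBot l) : Tendsto (deriv φ) atBot l :=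
  ha.congr' <| (eventually_lt_atBot b).mono fun _ hy =>
    (deriv_eq_derivWithin_of_eqOn h (Iic_mem_nhds hy)).symm

theorem tendsto_deriv_atTop_of_eqOn_Ici {b : ℝ} {l : Filter E} (h : EqOn φ a (Ici b))
    (ha : Tendsto (derivWithin a (Ici b)) atTop l) : Tendsto (deriv φ) atTop l :=
  ha.congr' <| (eventually_gt_atTop b).mono fun _ hy =>
    (deriv_eq_derivWithin_of_eqOn h (Ici_mem_nhds hy)).symm

end Decay

section TravellingWave

variable {E : Type*} [NormedAddCommGroup E] [NormedSpace ℝ E] (c : ℝ) (φ : ℝ → E)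

def travellingWave : ℝ × ℝ → E := fun p => φ (p.1 - c * p.2)

theorem deriv_travellingWave_space (x t : ℝ) :
    deriv (fun y => travellingWave c φ (y, t)) x = deriv φ (x - c * t) :=
  deriv_comp_sub_const φ (c * t) x

theorem deriv_travellingWave_time (x t : ℝ) :
    deriv (fun s => travellingWave c φ (x, s)) t = -c • deriv φ (x - c * t) := by
  rw [neg_smul, ← smul_neg, ← deriv_comp_const_sub]
  exact deriv_comp_mul_left c (fun u => φ (x - u)) t

theorem travellingWave_transport (x t : ℝ) :
    deriv (fun s => travellingWave c φ (x, s)) t =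
      -c • deriv (fun y => travellingWave c φ (y, t)) x := by
  rw [deriv_travellingWave_time, deriv_travellingWave_space]

variable {c φ}

theorem ContDiffOn.travellingWave {n : WithTop ℕ∞} {s : Set ℝ} {u : Set (ℝ × ℝ)}
    (hφ : ContDiffOn ℝ n φ s) (hu : MapsTo (fun p : ℝ × ℝ => p.1 - c * p.2) u s) :
    ContDiffOn ℝ n (travellingWave c φ) u :=
  hφ.comp (by fun_prop : ContDiff ℝ n fun p : ℝ × ℝ => p.1 - c * p.2).contDiffOn hu

theorem tendsto_travellingWave {l : Filter ℝ} (hl : ∀ r : ℝ, Tendsto (· + r) l l)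
    (hφ : Tendsto φ l (𝓝 0)) (hφ' : Tendsto (deriv φ) l (𝓝 0)) (t : ℝ) :
    Tendsto (fun x => travellingWave c φ (x, t)) l (𝓝 0) ∧
      Tendsto (fun x => deriv (fun y => travellingWave c φ (y, t)) x) l (𝓝 0) ∧
      Tendsto (fun x => deriv (fun s => travellingWave c φ (x, s)) t) l (𝓝 0) := by
  have hshift : Tendsto (fun x => x - c * t) l l := by
    simpa only [sub_eq_add_neg] using hl (-(c * t))
  simp only [deriv_travellingWave_space, deriv_travellingWave_time]
  refine ⟨hφ.comp hshift, hφ'.comp hshift, ?_⟩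
  simpa using (hφ'.comp hshift).const_smul (-c)

end TravellingWave

/-- Verification of the explicit solution of the massless Dirac interface problem on the
two semi-infinite domains `(-∞,0]` and `[0,∞)`: the piecewise transport waves built from
compatible, decaying `C¹` data `f₁, g₁` (left) and `f₂, g₂` (right) are continuously
differentiable, solve the two transport equations, take the prescribed initial values,
are continuous across the interface `x = 0`, and decay (together with their first `x`-
and `t`-derivatives) as `x → ∓∞`. -/
theorem massless_dirac_interface_solution_semiinfinite
    (f₁ g₁ f₂ g₂ : ℝ → ℂ)
    (hf₁ : ContDiffOn ℝ 1 f₁ (Set.Iic 0)) (hg₁ : ContDiffOn ℝ 1 g₁ (Set.Iic 0))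
    (hf₂ : ContDiffOn ℝ 1 f₂ (Set.Ici 0)) (hg₂ : ContDiffOn ℝ 1 g₂ (Set.Ici 0))
    (hf0 : f₁ 0 = f₂ 0)
    (hf0' : derivWithin f₁ (Set.Iic 0) 0 = derivWithin f₂ (Set.Ici 0) 0)
    (hg0 : g₁ 0 = g₂ 0)
    (hg0' : derivWithin g₁ (Set.Iic 0) 0 = derivWithin g₂ (Set.Ici 0) 0)
    (hf₁dec : Tendsto f₁ atBot (nhds 0))
    (hf₁dec' : Tendsto (derivWithin f₁ (Set.Iic 0)) atBot (nhds 0))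
    (hg₁dec : Tendsto g₁ atBot (nhds 0))
    (hg₁dec' : Tendsto (derivWithin g₁ (Set.Iic 0)) atBot (nhds 0))
    (hf₂dec : Tendsto f₂ atTop (nhds 0))
    (hf₂dec' : Tendsto (derivWithin f₂ (Set.Ici 0)) atTop (nhds 0))
    (hg₂dec : Tendsto g₂ atTop (nhds 0))
    (hg₂dec' : Tendsto (derivWithin g₂ (Set.Ici 0)) atTop (nhds 0))
    (Ψ₁₁ Ψ₂₁ Ψ₁₂ Ψ₂₂ : ℝ × ℝ → ℂ)
    (hΨ₁₁ : ∀ x t : ℝ, Ψ₁₁ (x, t) = f₁ (x - t))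
    (hΨ₂₁ : ∀ x t : ℝ, Ψ₂₁ (x, t) = if x + t ≤ 0 then g₁ (x + t) else g₂ (x + t))
    (hΨ₁₂ : ∀ x t : ℝ, Ψ₁₂ (x, t) = if t ≤ x then f₂ (x - t) else f₁ (x - t))
    (hΨ₂₂ : ∀ x t : ℝ, Ψ₂₂ (x, t) = g₂ (x + t)) :
    -- continuous differentiability on the two space-time domains
    (ContDiffOn ℝ 1 Ψ₁₁ (Set.Iic 0 ×ˢ Set.Ici 0) ∧
     ContDiffOn ℝ 1 Ψ₂₁ (Set.Iic 0 ×ˢ Set.Ici 0) ∧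
     ContDiffOn ℝ 1 Ψ₁₂ (Set.Ici 0 ×ˢ Set.Ici 0) ∧
     ContDiffOn ℝ 1 Ψ₂₂ (Set.Ici 0 ×ˢ Set.Ici 0)) ∧
    -- the transport equations of the massless Dirac system
    (∀ x < (0:ℝ), ∀ t > (0:ℝ),
      Complex.I * deriv (fun s : ℝ => Ψ₁₁ (x, s)) t =
        -Complex.I * deriv (fun y : ℝ => Ψ₁₁ (y, t)) x ∧
      Complex.I * deriv (fun s : ℝ => Ψ₂₁ (x, s)) t =
        Complex.I * deriv (fun y : ℝ => Ψ₂₁ (y, t)) x) ∧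
    (∀ x > (0:ℝ), ∀ t > (0:ℝ),
      Complex.I * deriv (fun s : ℝ => Ψ₁₂ (x, s)) t =
        -Complex.I * deriv (fun y : ℝ => Ψ₁₂ (y, t)) x ∧
      Complex.I * deriv (fun s : ℝ => Ψ₂₂ (x, s)) t =
        Complex.I * deriv (fun y : ℝ => Ψ₂₂ (y, t)) x) ∧
    -- initial conditions
    (∀ x ≤ (0:ℝ), Ψ₁₁ (x, 0) = f₁ x ∧ Ψ₂₁ (x, 0) = g₁ x) ∧
    (∀ x ≥ (0:ℝ), Ψ₁₂ (x, 0) = f₂ x ∧ Ψ₂₂ (x, 0) = g₂ x) ∧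
    -- interface continuity at x = 0
    (∀ t > (0:ℝ), Ψ₁₁ (0, t) = Ψ₁₂ (0, t) ∧ Ψ₂₁ (0, t) = Ψ₂₂ (0, t)) ∧
    -- decay of the solutions and their first derivatives as x → -∞
    (∀ Ψ ∈ [Ψ₁₁, Ψ₂₁], ∀ t ≥ (0:ℝ),
      Tendsto (fun x => Ψ (x, t)) atBot (nhds 0) ∧
      Tendsto (fun x => deriv (fun y : ℝ => Ψ (y, t)) x) atBot (nhds 0) ∧
      Tendsto (fun x => deriv (fun s : ℝ => Ψ (x, s)) t) atBot (nhds 0)) ∧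
    -- decay of the solutions and their first derivatives as x → +∞
    (∀ Ψ ∈ [Ψ₁₂, Ψ₂₂], ∀ t ≥ (0:ℝ),
      Tendsto (fun x => Ψ (x, t)) atTop (nhds 0) ∧
      Tendsto (fun x => deriv (fun y : ℝ => Ψ (y, t)) x) atTop (nhds 0) ∧
      Tendsto (fun x => deriv (fun s : ℝ => Ψ (x, s)) t) atTop (nhds 0)) := by
  have hF : ContDiff ℝ 1 (glue f₁ f₂) := contDiff_one_glue hf₁ hf₂ hf0 hf0'
  have hG : ContDiff ℝ 1 (glue g₁ g₂) := contDiff_one_glue hg₁ hg₂ hg0 hg0'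
  have hF₂ : EqOn (glue f₁ f₂) f₂ (Ici 0) := glue_eqOn_Ici hf0
  have hG₁ : EqOn (glue g₁ g₂) g₁ (Iic 0) := glue_eqOn_Iic
  have hBot (r : ℝ) : Tendsto (· + r) atBot atBot := tendsto_atBot_add_const_right _ r tendsto_id
  have hTop (r : ℝ) : Tendsto (· + r) atTop atTop := tendsto_atTop_add_const_right _ r tendsto_id
  obtain rfl : Ψ₁₁ = travellingWave 1 f₁ := funext fun _ => by simp [travellingWave, hΨ₁₁]
  obtain rfl : Ψ₂₁ = travellingWave (-1) (glue g₁ g₂) :=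
    funext fun _ => by simp [travellingWave, hΨ₂₁, glue]
  obtain rfl : Ψ₁₂ = travellingWave 1 (glue f₁ f₂) := funext fun ⟨x, t⟩ => by
    rw [hΨ₁₂, travellingWave, one_mul]
    split_ifs with h
    · exact (hF₂ (sub_nonneg.mpr h)).symm
    · exact (glue_eqOn_Iic (sub_nonpos.mpr (not_le.mp h).le)).symm
  obtain rfl : Ψ₂₂ = travellingWave (-1) g₂ := funext fun _ => by simp [travellingWave, hΨ₂₂]
  refine ⟨⟨hf₁.travellingWave fun p ⟨(hx : p.1 ≤ 0), (ht : 0 ≤ p.2)⟩ => ?_,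
      hG.contDiffOn.travellingWave (mapsTo_univ _ _),
      hF.contDiffOn.travellingWave (mapsTo_univ _ _),
      hg₂.travellingWave fun p ⟨(hx : 0 ≤ p.1), (ht : 0 ≤ p.2)⟩ => ?_⟩,
    fun x _ t _ => ?_, fun x _ t _ => ?_, fun x hx => ?_, fun x hx => ?_, fun t ht => ?_, ?_, ?_⟩
  · change p.1 - 1 * p.2 ≤ 0
    linarith
  · change 0 ≤ p.1 - -1 * p.2
    linarith
  · constructor <;> rw [travellingWave_transport] <;> simp
  · constructor <;> rw [travellingWave_transport] <;> simp
  · simp [hΨ₁₁, hΨ₂₁, hx]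
  · simp [hΨ₁₂, hΨ₂₂, hx]
  · simp [hΨ₁₁, hΨ₁₂, hΨ₂₁, hΨ₂₂, ht.not_ge]
  · simp only [List.mem_cons, List.not_mem_nil, or_false]
    rintro Ψ (rfl | rfl) t -
    · exact tendsto_travellingWave hBot hf₁dec
        (tendsto_deriv_atBot_of_eqOn_Iic (eqOn_refl _ _) hf₁dec') t
    · exact tendsto_travellingWave hBot
        (hg₁dec.congr' (hG₁.eventuallyEq_of_mem (Iic_mem_atBot 0)).symm)
        (tendsto_deriv_atBot_of_eqOn_Iic hG₁ hg₁dec') t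
  · simp only [List.mem_cons, List.not_mem_nil, or_false]
    rintro Ψ (rfl | rfl) t -
    · exact tendsto_travellingWave hTop
        (hf₂dec.congr' (hF₂.eventuallyEq_of_mem (Ici_mem_atTop 0)).symm)
        (tendsto_deriv_atTop_of_eqOn_Ici hF₂ hf₂dec') t
    · exact tendsto_travellingWave hTop hg₂dec
        (tendsto_deriv_atTop_of_eqOn_Ici (eqOn_refl _ _) hg₂dec') t
end

section
/- Let L > 0. Let f₁, g₁ : [−L,0] → ℂ, f₂, g₂ : [0,L] → ℂ and α₁⁽¹⁾, α₂⁽²⁾ : [0,∞) → ℂ be continuously differentiable and satisfy the compatibility conditions f₁(0) = f₂(0), f₁′(0) = f₂′(0), g₁(0) = g₂(0), g₁′(0) = g₂′(0), α₁⁽¹⁾(0) = f₁(−L), (α₁⁽¹⁾)′(0) = −f₁′(−L), α₂⁽²⁾(0) = g₂(L), (α₂⁽²⁾)′(0) = g₂′(L). Define, for x ∈ [−L,0] and t ≥ 0: Ψ₁⁽¹⁾(x,t) = f₁(x−t) if x−t ≥ −L and Ψ₁⁽¹⁾(x,t) = α₁⁽¹⁾(t−x−L) if x−t < −L; Ψ₂⁽¹⁾(x,t)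 = g₁(x+t) if x+t ≤ 0, Ψ₂⁽¹⁾(x,t) = g₂(x+t) if 0 < x+t ≤ L, and Ψ₂⁽¹⁾(x,t) = α₂⁽²⁾(x+t−L) if x+t > L; and, for x ∈ [0,L] and t ≥ 0: Ψ₁⁽²⁾(x,t) = f₂(x−t) if x−t ≥ 0, Ψ₁⁽²⁾(x,t) = f₁(x−t) if −L ≤ x−t < 0, and Ψ₁⁽²⁾(x,t) = α₁⁽¹⁾(t−x−L) if x−t < −L; Ψ₂⁽²⁾(x,t) = g₂(x+t) if x+t ≤ L and Ψ₂⁽²⁾(x,t) = α₂⁽²⁾(x+t−L) if x+t > L. Then these four functions are continuously differentiable, satisfy i ∂ₜΨ₁⁽ʲ⁾ = −i ∂ₓΨ₁⁽ʲ⁾ and i ∂ₜΨ₂⁽ʲ⁾ = i ∂ₓΨ₂⁽ʲ⁾ on their respective domains, take the initial values f₁, g₁, f₂, g₂ at t = 0, satisfy the interface continuity conditions Ψₗ⁽¹⁾(0,t) = Ψₗ⁽²⁾(0,t) (l = 1,2, t > 0), and satisfy the boundary conditions Ψ₁⁽¹⁾(−L,t) = α₁⁽¹⁾(t) and Ψ₂⁽²⁾(L,t)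 = α₂⁽²⁾(t) for t > 0. -/
/-!
Each of the four waves is a one-variable profile evaluated at `x - t` or `x + t`. Translating
and reflecting the variable commutes with `deriv`, so the transport equations hold outright,
and regularity reduces to each profile being `C¹` on a half-line. The profiles are the initial
data continued by the boundary data (`a₁` reflected at `-L`, `a₂` translated to `L`) and by the
data of the other domain. The compatibility conditions say exactly that values and one-sided
derivatives match at the junctions `-L`, `0`, `L`, and a function that is `C¹` on two closed
sets whose derivatives agree on their intersection is `C¹` on their union.
-/

open Set Pointwise

theorem ContDiffOn.union_of_isClosed {𝕜 E : Type*} [NontriviallyNormedField 𝕜]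
    [NormedAddCommGroup E] [NormedSpace 𝕜 E] {f : 𝕜 → E} {s t : Set 𝕜}
    (hs : ContDiffOn 𝕜 1 f s) (ht : ContDiffOn 𝕜 1 f t) (hsc : IsClosed s) (htc : IsClosed t)
    (hsu : UniqueDiffOn 𝕜 s) (htu : UniqueDiffOn 𝕜 t)
    (hd : ∀ x ∈ s ∩ t, derivWithin f s x = derivWithin f t x) :
    ContDiffOn 𝕜 1 f (s ∪ t) := by
  classical
  set g := s.piecewise (derivWithin f s) (derivWithin f t)
  have hgs : EqOn g (derivWithin f s) s := s.piecewise_eqOn _ _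
  have hgt : EqOn g (derivWithin f t) t := fun x hx => by
    by_cases hxs : x ∈ s
    · rw [hgs hxs, hd x ⟨hxs, hx⟩]
    · exact s.piecewise_eq_of_notMem _ _ hxs
  -- off a closed set, a derivative within it holds vacuously
  have hderiv (u : Set 𝕜) (hu : ContDiffOn 𝕜 1 f u) (huc : IsClosed u)
      (hgu : EqOn g (derivWithin f u) u) (x : 𝕜) : HasDerivWithinAt f (g x) u x := by
    by_cases hx : x ∈ u
    · rw [hgu hx]
      exact (hu.differentiableOn one_ne_zero x hx).hasDerivWithinAt
    · exact HasFDerivWithinAt.of_notMem_closure (by rwa [huc.closure_eq])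
  have hst (x : 𝕜) : HasDerivWithinAt f (g x) (s ∪ t) x :=
    (hderiv s hs hsc hgs x).union (hderiv t ht htc hgt x)
  have hstu : UniqueDiffOn 𝕜 (s ∪ t) := fun x hx =>
    hx.elim (fun h => (hsu x h).mono subset_union_left) (fun h => (htu x h).mono subset_union_right)
  rw [contDiffOn_one_iff_derivWithin hstu]
  refine ⟨fun x _ => (hst x).differentiableWithinAt, ?_⟩
  refine ContinuousOn.congr ?_ fun x hx => (hst x).derivWithin (hstu x hx)
  exact ((hs.continuousOn_derivWithin hsu le_rfl).congr hgs).union_of_isClosed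
    ((ht.continuousOn_derivWithin htu le_rfl).congr hgt) hsc htc

variable {E : Type*} [NormedAddCommGroup E] [NormedSpace ℝ E]

section Gluing

variable {u v : ℝ → E} {b c : ℝ}

theorem contDiffOn_Iic_ite (hbc : b < c) (hu : ContDiffOn ℝ 1 u (Iic b))
    (hv : ContDiffOn ℝ 1 v (Icc b c)) (hval : u b = v b)
    (hder : derivWithin u (Iic b) b = derivWithin v (Icc b c) b) :
    ContDiffOn ℝ 1 (fun x => if b ≤ x then v x else u x) (Iic c) := by
  have hFu : EqOn (fun x => if b ≤ x then v x else u x) u (Iic b) := fun x hx => by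
    rcases (mem_Iic.1 hx).eq_or_lt with rfl | hlt
    · simp [hval]
    · simp [hlt.not_ge]
  have hFv : EqOn (fun x => if b ≤ x then v x else u x) v (Icc b c) := fun x hx => if_pos hx.1
  rw [← Iic_union_Icc_eq_Iic hbc.le]
  refine (hu.congr hFu).union_of_isClosed (hv.congr hFv) isClosed_Iic isClosed_Icc
    (uniqueDiffOn_Iic b) (uniqueDiffOn_Icc hbc) ?_
  rintro x ⟨hxb, hbx, -⟩
  obtain rfl : x = b := le_antisymm hxb hbx
  rw [derivWithin_congr hFu (hFu hxb), derivWithin_congr hFv (hFv ⟨hbx, hbc.le⟩), hder]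

theorem contDiffOn_Ici_ite (hbc : b < c) (hu : ContDiffOn ℝ 1 u (Icc b c))
    (hv : ContDiffOn ℝ 1 v (Ici c)) (hval : u c = v c)
    (hder : derivWithin u (Icc b c) c = derivWithin v (Ici c) c) :
    ContDiffOn ℝ 1 (fun x => if x ≤ c then u x else v x) (Ici b) := by
  have hFu : EqOn (fun x => if x ≤ c then u x else v x) u (Icc b c) := fun x hx => if_pos hx.2
  have hFv : EqOn (fun x => if x ≤ c then u x else v x) v (Ici c) := fun x hx => by
    rcases (mem_Ici.1 hx).eq_or_lt with rfl | hlt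
    · simp [hval]
    · simp [hlt.not_ge]
  rw [← Icc_union_Ici_eq_Ici hbc.le]
  refine (hu.congr hFu).union_of_isClosed (hv.congr hFv) isClosed_Icc isClosed_Ici
    (uniqueDiffOn_Icc hbc) (uniqueDiffOn_Ici c) ?_
  rintro x ⟨⟨-, hxc⟩, hcx⟩
  obtain rfl : x = c := le_antisymm hxc hcx
  rw [derivWithin_congr hFu (hFu ⟨hbc.le, hxc⟩), derivWithin_congr hFv (hFv hcx), hder]

theorem derivWithin_Iic_ite (hbc : b < c) :
    derivWithin (fun x => if b ≤ x then v x else u x) (Iic c) c = derivWithin v (Icc b c) c := by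
  rw [← derivWithin_inter (Ici_mem_nhds hbc), Iic_inter_Ici]
  exact derivWithin_congr (fun x hx => if_pos hx.1) (if_pos hbc.le)

theorem derivWithin_Ici_ite (hbc : b < c) :
    derivWithin (fun x => if x ≤ c then u x else v x) (Ici b) b = derivWithin u (Icc b c) b := by
  rw [← derivWithin_inter (Iic_mem_nhds hbc), Ici_inter_Iic]
  exact derivWithin_congr (fun x hx => if_pos hx.2) (if_pos hbc.le)

end Gluing

section BoundaryData

variable {a : ℝ → E} {b c : ℝ}

theorem contDiffOn_Iic_ite_const_sub (hbc : b < c) {f : ℝ → E}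
    (hf : ContDiffOn ℝ 1 f (Icc b c)) (ha : ContDiffOn ℝ 1 a (Ici 0)) (h₀ : a 0 = f b)
    (h₀' : derivWithin a (Ici 0) 0 = -derivWithin f (Icc b c) b) :
    ContDiffOn ℝ 1 (fun x => if b ≤ x then f x else a (b - x)) (Iic c) := by
  refine contDiffOn_Iic_ite hbc ?_ hf (by simp [h₀]) ?_
  · exact ha.comp (by fun_prop) fun x hx => mem_Ici.2 (sub_nonneg.2 hx)
  · rw [derivWithin_comp_const_sub, neg_Iic, ← image_vadd]
    simp [h₀']

theorem contDiffOn_Ici_ite_sub_const (hbc : b < c) {g : ℝ → E}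
    (hg : ContDiffOn ℝ 1 g (Icc b c)) (ha : ContDiffOn ℝ 1 a (Ici 0)) (h₀ : a 0 = g c)
    (h₀' : derivWithin a (Ici 0) 0 = derivWithin g (Icc b c) c) :
    ContDiffOn ℝ 1 (fun x => if x ≤ c then g x else a (x - c)) (Ici b) := by
  refine contDiffOn_Ici_ite hbc hg ?_ (by simp [h₀]) ?_
  · exact ha.comp (by fun_prop) fun x hx => mem_Ici.2 (sub_nonneg.2 hx)
  · rw [derivWithin_comp_sub_const, ← image_vadd]
    simp [h₀']

end BoundaryData

section Waves

variable {n : WithTop ℕ∞} {W : ℝ → E} {Ψ : ℝ × ℝ → E} {c : ℝ}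

theorem contDiffOn_and_transport_of_eq_comp_sub (hW : ContDiffOn ℝ n W (Iic c))
    (hΨ : ∀ x t, Ψ (x, t) = W (x - t)) :
    ContDiffOn ℝ n Ψ (Iic c ×ˢ Ici 0) ∧
      ∀ x t, deriv (fun s => Ψ (x, s)) t = -deriv (fun y => Ψ (y, t)) x := by
  obtain rfl : Ψ = fun p => W (p.1 - p.2) := funext fun p => hΨ p.1 p.2
  refine ⟨hW.comp (by fun_prop) fun p hp => ?_, fun x t => ?_⟩
  · simp only [mem_Iic, mem_prod, mem_Ici] at hp ⊢
    linarith
  · rw [deriv_comp_const_sub, deriv_comp_sub_const]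

theorem contDiffOn_and_transport_of_eq_comp_add (hW : ContDiffOn ℝ n W (Ici c))
    (hΨ : ∀ x t, Ψ (x, t) = W (x + t)) :
    ContDiffOn ℝ n Ψ (Ici c ×ˢ Ici 0) ∧
      ∀ x t, deriv (fun s => Ψ (x, s)) t = deriv (fun y => Ψ (y, t)) x := by
  obtain rfl : Ψ = fun p => W (p.1 + p.2) := funext fun p => hΨ p.1 p.2
  refine ⟨hW.comp (by fun_prop) fun p hp => ?_, fun x t => ?_⟩
  · simp only [mem_Ici, mem_prod] at hp ⊢
    linarith
  · rw [deriv_comp_const_add, deriv_comp_add_const]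

end Waves

/-- Verification of the explicit solution of the massless Dirac interface problem on the
two finite domains `[-L,0]` and `[0,L]`: the piecewise transport waves built from
compatible `C¹` initial data `f₁, g₁, f₂, g₂` and boundary data `a₁ = α₁⁽¹⁾` (at `x=-L`)
and `a₂ = α₂⁽²⁾` (at `x=L`) are continuously differentiable, solve the two transport
equations, take the prescribed initial values, are continuous across the interface
`x = 0`, and take the prescribed boundary values. -/
theorem massless_dirac_interface_solution_finite
    (L : ℝ) (hL : 0 < L)
    (f₁ g₁ f₂ g₂ a₁ a₂ : ℝ → ℂ)
    (hf₁ : ContDiffOn ℝ 1 f₁ (Set.Icc (-L) 0)) (hg₁ : ContDiffOn ℝ 1 g₁ (Set.Icc (-L) 0))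
    (hf₂ : ContDiffOn ℝ 1 f₂ (Set.Icc 0 L)) (hg₂ : ContDiffOn ℝ 1 g₂ (Set.Icc 0 L))
    (ha₁ : ContDiffOn ℝ 1 a₁ (Set.Ici 0)) (ha₂ : ContDiffOn ℝ 1 a₂ (Set.Ici 0))
    (hf0 : f₁ 0 = f₂ 0)
    (hf0' : derivWithin f₁ (Set.Icc (-L) 0) 0 = derivWithin f₂ (Set.Icc 0 L) 0)
    (hg0 : g₁ 0 = g₂ 0)
    (hg0' : derivWithin g₁ (Set.Icc (-L) 0) 0 = derivWithin g₂ (Set.Icc 0 L) 0)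
    (ha₁0 : a₁ 0 = f₁ (-L))
    (ha₁0' : derivWithin a₁ (Set.Ici 0) 0 = -derivWithin f₁ (Set.Icc (-L) 0) (-L))
    (ha₂0 : a₂ 0 = g₂ L)
    (ha₂0' : derivWithin a₂ (Set.Ici 0) 0 = derivWithin g₂ (Set.Icc 0 L) L)
    (Ψ₁₁ Ψ₂₁ Ψ₁₂ Ψ₂₂ : ℝ × ℝ → ℂ)
    (hΨ₁₁ : ∀ x t : ℝ, Ψ₁₁ (x, t) =
      if -L ≤ x - t then f₁ (x - t) else a₁ (t - x - L))
    (hΨ₂₁ : ∀ x t : ℝ, Ψ₂₁ (x, t) =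
      if x + t ≤ 0 then g₁ (x + t)
      else if x + t ≤ L then g₂ (x + t) else a₂ (x + t - L))
    (hΨ₁₂ : ∀ x t : ℝ, Ψ₁₂ (x, t) =
      if 0 ≤ x - t then f₂ (x - t)
      else if -L ≤ x - t then f₁ (x - t) else a₁ (t - x - L))
    (hΨ₂₂ : ∀ x t : ℝ, Ψ₂₂ (x, t) =
      if x + t ≤ L then g₂ (x + t) else a₂ (x + t - L)) :
    -- continuous differentiability on the two space-time domains
    (ContDiffOn ℝ 1 Ψ₁₁ (Set.Icc (-L) 0 ×ˢ Set.Ici 0) ∧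
     ContDiffOn ℝ 1 Ψ₂₁ (Set.Icc (-L) 0 ×ˢ Set.Ici 0) ∧
     ContDiffOn ℝ 1 Ψ₁₂ (Set.Icc 0 L ×ˢ Set.Ici 0) ∧
     ContDiffOn ℝ 1 Ψ₂₂ (Set.Icc 0 L ×ˢ Set.Ici 0)) ∧
    -- the transport equations of the massless Dirac system
    (∀ x ∈ Set.Ioo (-L) (0:ℝ), ∀ t > (0:ℝ),
      Complex.I * deriv (fun s : ℝ => Ψ₁₁ (x, s)) t =
        -Complex.I * deriv (fun y : ℝ => Ψ₁₁ (y, t)) x ∧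
      Complex.I * deriv (fun s : ℝ => Ψ₂₁ (x, s)) t =
        Complex.I * deriv (fun y : ℝ => Ψ₂₁ (y, t)) x) ∧
    (∀ x ∈ Set.Ioo (0:ℝ) L, ∀ t > (0:ℝ),
      Complex.I * deriv (fun s : ℝ => Ψ₁₂ (x, s)) t =
        -Complex.I * deriv (fun y : ℝ => Ψ₁₂ (y, t)) x ∧
      Complex.I * deriv (fun s : ℝ => Ψ₂₂ (x, s)) t =
        Complex.I * deriv (fun y : ℝ => Ψ₂₂ (y, t)) x) ∧
    -- initial conditions
    (∀ x ∈ Set.Icc (-L) (0:ℝ), Ψ₁₁ (x, 0) = f₁ x ∧ Ψ₂₁ (x, 0) = g₁ x) ∧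
    (∀ x ∈ Set.Icc (0:ℝ) L, Ψ₁₂ (x, 0) = f₂ x ∧ Ψ₂₂ (x, 0) = g₂ x) ∧
    -- interface continuity at x = 0
    (∀ t > (0:ℝ), Ψ₁₁ (0, t) = Ψ₁₂ (0, t) ∧ Ψ₂₁ (0, t) = Ψ₂₂ (0, t)) ∧
    -- boundary conditions at x = -L and x = L
    (∀ t > (0:ℝ), Ψ₁₁ (-L, t) = a₁ t ∧ Ψ₂₂ (L, t) = a₂ t) := by
  have hL' : -L < 0 := neg_lt_zero.2 hL
  have hW₁ := contDiffOn_Iic_ite_const_sub hL' hf₁ ha₁ ha₁0 ha₁0'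
  have hW₂ := contDiffOn_Iic_ite hL hW₁ hf₂ (by simp [hL'.le, hf0])
    (by rw [derivWithin_Iic_ite hL', hf0'])
  have hV₂ := contDiffOn_Ici_ite_sub_const hL hg₂ ha₂ ha₂0 ha₂0'
  have hV₁ := contDiffOn_Ici_ite hL' hg₁ hV₂ (by simp [hL.le, hg0])
    (by rw [derivWithin_Ici_ite hL, hg0'])
  obtain ⟨hC₁₁, hT₁₁⟩ := contDiffOn_and_transport_of_eq_comp_sub hW₁ fun x t =>
    (hΨ₁₁ x t).trans <| by split_ifs <;> ring_nf
  obtain ⟨hC₁₂, hT₁₂⟩ := contDiffOn_and_transport_of_eq_comp_sub hW₂ fun x t =>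
    (hΨ₁₂ x t).trans <| by split_ifs <;> ring_nf
  obtain ⟨hC₂₁, hT₂₁⟩ := contDiffOn_and_transport_of_eq_comp_add hV₁ hΨ₂₁
  obtain ⟨hC₂₂, hT₂₂⟩ := contDiffOn_and_transport_of_eq_comp_add hV₂ hΨ₂₂
  refine ⟨⟨hC₁₁.mono (prod_mono Icc_subset_Iic_self subset_rfl),
    hC₂₁.mono (prod_mono Icc_subset_Ici_self subset_rfl),
    hC₁₂.mono (prod_mono Icc_subset_Iic_self subset_rfl),
    hC₂₂.mono (prod_mono Icc_subset_Ici_self subset_rfl)⟩,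
    fun x _ t _ => ⟨by rw [hT₁₁]; ring, by rw [hT₂₁]⟩,
    fun x _ t _ => ⟨by rw [hT₁₂]; ring, by rw [hT₂₂]⟩,
    fun x hx => ⟨by simp [hΨ₁₁, hx.1], by simp [hΨ₂₁, hx.2]⟩,
    fun x hx => ⟨by simp [hΨ₁₂, hx.1], by simp [hΨ₂₂, hx.2]⟩,
    fun t ht => ⟨by simp [hΨ₁₁, hΨ₁₂, ht], by simp [hΨ₂₁, hΨ₂₂, ht]⟩,
    fun t ht => ⟨by simp [hΨ₁₁, ht], by simp [hΨ₂₂, ht]⟩⟩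
end

section
/- Let m > 0 and let Ψ₁, Ψ₂ : U → ℂ be continuously differentiable on an open set U ⊆ ℝ² (coordinates (x,t)) satisfying i ∂ₜΨ₁ = −i ∂ₓΨ₁ + m Ψ₂ and i ∂ₜΨ₂ = i ∂ₓΨ₂ + m Ψ₁ on U. Then for every k ∈ ℂ and every Ω ∈ ℂ with Ω² = −(k² + m²), the identity ∂ₜ( e^{−ikx+Ωt} [ i m Ψ₁(x,t) + (Ω − ik) Ψ₂(x,t) ] ) = ∂ₓ( e^{−ikx+Ωt} [ −i m Ψ₁(x,t) + (Ω − ik) Ψ₂(x,t) ] ) holds at every point (x,t) ∈ U. -/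
/-!
By the product rule, both sides of the identity become `e^{-ikx+Ωt}` times a linear
expression in `Ψ` and its partial derivatives. Eliminating the `t`-derivatives with the two
equations of the system leaves a multiple of `Ω² + k² + m²`, which vanishes on the dispersion
relation.
-/

open Complex

section Slices

variable {𝕜 : Type*} [NontriviallyNormedField 𝕜] {E : Type*} [NormedAddCommGroup E]
  [NormedSpace 𝕜 E] {f : 𝕜 × 𝕜 → E} {p : 𝕜 × 𝕜}

theorem DifferentiableAt.hasDerivAt_slice_fst (h : DifferentiableAt 𝕜 f p) :
    HasDerivAt (fun y => f (y, p.2)) (deriv (fun y => f (y, p.2)) p.1) p.1 :=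
  (h.comp p.1 (differentiableAt_id.prodMk (differentiableAt_const p.2))).hasDerivAt

theorem DifferentiableAt.hasDerivAt_slice_snd (h : DifferentiableAt 𝕜 f p) :
    HasDerivAt (fun s => f (p.1, s)) (deriv (fun s => f (p.1, s)) p.2) p.2 :=
  (h.comp p.2 ((differentiableAt_const p.1).prodMk differentiableAt_id)).hasDerivAt

end Slices

theorem HasDerivAt.cexp_mul {𝕜 : Type*} [NontriviallyNormedField 𝕜] [NormedAlgebra 𝕜 ℂ]
    {φ g : 𝕜 → ℂ} {c g' : ℂ} {t : 𝕜} (hφ : HasDerivAt φ c t) (hg : HasDerivAt g g' t) :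
    HasDerivAt (fun s => cexp (φ s) * g s) (cexp (φ t) * (c * g t + g')) t :=
  (hφ.cexp.fun_mul hg).congr_deriv (by ring)

theorem hasDerivAt_const_add_mul_ofReal (a c : ℂ) (t : ℝ) :
    HasDerivAt (fun s : ℝ => a + c * s) c t := by
  simpa using (ofRealCLM.hasDerivAt (x := t)).const_mul c |>.const_add a

theorem hasDerivAt_mul_ofReal_add_const (a c : ℂ) (t : ℝ) :
    HasDerivAt (fun s : ℝ => c * s + a) c t := by
  simpa using (ofRealCLM.hasDerivAt (x := t)).const_mul c |>.add_const a

theorem massive_dirac_plane_wave_flux_eq {m k Ω ψ₁ ψ₂ dt₁ dt₂ dx₁ dx₂ : ℂ}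
    (hΩ : Ω ^ 2 = -(k ^ 2 + m ^ 2)) (h₁ : I * dt₁ = -I * dx₁ + m * ψ₂)
    (h₂ : I * dt₂ = I * dx₂ + m * ψ₁) :
    Ω * (I * m * ψ₁ + (Ω - I * k) * ψ₂) + (I * m * dt₁ + (Ω - I * k) * dt₂) =
      -I * k * (-(I * m) * ψ₁ + (Ω - I * k) * ψ₂) + (-(I * m) * dx₁ + (Ω - I * k) * dx₂) := by
  linear_combination m * h₁ - I * (Ω - I * k) * h₂ + ψ₂ * hΩ
    + ((Ω - I * k) * (dt₂ - dx₂) - k ^ 2 * ψ₂) * I_sq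

theorem massive_dirac_local_relation_general
    (m : ℝ) (U : Set (ℝ × ℝ)) (hU : IsOpen U)
    (Ψ₁ Ψ₂ : ℝ × ℝ → ℂ)
    (hΨ₁ : ContDiffOn ℝ 1 Ψ₁ U) (hΨ₂ : ContDiffOn ℝ 1 Ψ₂ U)
    (pde₁ : ∀ p ∈ U, Complex.I * deriv (fun s : ℝ => Ψ₁ (p.1, s)) p.2 =
        -Complex.I * deriv (fun y : ℝ => Ψ₁ (y, p.2)) p.1 + m * Ψ₂ p)
    (pde₂ : ∀ p ∈ U, Complex.I * deriv (fun s : ℝ => Ψ₂ (p.1, s)) p.2 =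
        Complex.I * deriv (fun y : ℝ => Ψ₂ (y, p.2)) p.1 + m * Ψ₁ p) :
    ∀ (k Ω : ℂ), Ω ^ 2 = -(k ^ 2 + m ^ 2) → ∀ p ∈ U,
      deriv (fun s : ℝ => Complex.exp (-Complex.I * k * p.1 + Ω * s) *
          (Complex.I * m * Ψ₁ (p.1, s) + (Ω - Complex.I * k) * Ψ₂ (p.1, s))) p.2 =
      deriv (fun y : ℝ => Complex.exp (-Complex.I * k * y + Ω * p.2) *
          (-(Complex.I * m) * Ψ₁ (y, p.2) + (Ω - Complex.I * k) * Ψ₂ (y, p.2))) p.1 := by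
  intro k Ω hΩ p hp
  have hd₁ : DifferentiableAt ℝ Ψ₁ p :=
    (hΨ₁.differentiableOn one_ne_zero).differentiableAt (hU.mem_nhds hp)
  have hd₂ : DifferentiableAt ℝ Ψ₂ p :=
    (hΨ₂.differentiableOn one_ne_zero).differentiableAt (hU.mem_nhds hp)
  have ht := (hasDerivAt_const_add_mul_ofReal (-I * k * p.1) Ω p.2).cexp_mul
    ((hd₁.hasDerivAt_slice_snd.const_mul (I * m)).fun_add
      (hd₂.hasDerivAt_slice_snd.const_mul (Ω - I * k)))
  have hx := (hasDerivAt_mul_ofReal_add_const (Ω * p.2) (-I * k) p.1).cexp_mul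
    ((hd₁.hasDerivAt_slice_fst.const_mul (-(I * m))).fun_add
      (hd₂.hasDerivAt_slice_fst.const_mul (Ω - I * k)))
  rw [ht.deriv, hx.deriv]
  exact congrArg _ (massive_dirac_plane_wave_flux_eq hΩ (pde₁ p hp) (pde₂ p hp))

/-- The local (divergence-form) relation for the one-dimensional massive Dirac system:
for any continuously differentiable solution on an open set `U ⊆ ℝ²` and any branch
`Ω` of the dispersion relation (`Ω² = -(k² + m²)`), the stated identity between the
`t`-derivative and the `x`-derivative holds at every point of `U`. -/
theorem massive_dirac_local_relation
    (m : ℝ) (hm : 0 < m) (U : Set (ℝ × ℝ)) (hU : IsOpen U)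
    (Ψ₁ Ψ₂ : ℝ × ℝ → ℂ)
    (hΨ₁ : ContDiffOn ℝ 1 Ψ₁ U) (hΨ₂ : ContDiffOn ℝ 1 Ψ₂ U)
    (pde₁ : ∀ p ∈ U, Complex.I * deriv (fun s : ℝ => Ψ₁ (p.1, s)) p.2 =
        -Complex.I * deriv (fun y : ℝ => Ψ₁ (y, p.2)) p.1 + m * Ψ₂ p)
    (pde₂ : ∀ p ∈ U, Complex.I * deriv (fun s : ℝ => Ψ₂ (p.1, s)) p.2 =
        Complex.I * deriv (fun y : ℝ => Ψ₂ (y, p.2)) p.1 + m * Ψ₁ p) :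
    ∀ (k Ω : ℂ), Ω ^ 2 = -(k ^ 2 + m ^ 2) → ∀ p ∈ U,
      deriv (fun s : ℝ => Complex.exp (-Complex.I * k * p.1 + Ω * s) *
          (Complex.I * m * Ψ₁ (p.1, s) + (Ω - Complex.I * k) * Ψ₂ (p.1, s))) p.2 =
      deriv (fun y : ℝ => Complex.exp (-Complex.I * k * y + Ω * p.2) *
          (-(Complex.I * m) * Ψ₁ (y, p.2) + (Ω - Complex.I * k) * Ψ₂ (y, p.2))) p.1 :=
  massive_dirac_local_relation_general m U hU Ψ₁ Ψ₂ hΨ₁ hΨ₂ pde₁ pde₂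
end

section
/- Let L > 0, T > 0, m > 0, and let Ψ₁, Ψ₂ : [−L,0]×[0,T] → ℂ be continuously differentiable and satisfy i ∂ₜΨ₁ = −i ∂ₓΨ₁ + m Ψ₂ and i ∂ₜΨ₂ = i ∂ₓΨ₂ + m Ψ₁. For k ∈ ℂ and s ∈ [0,T] write Ψ̂ₗ(k,s) = ∫_{−L}^0 e^{−ikx} Ψₗ(x,s) dx, B₋L,ₗ(Ω,t) = ∫_0^t e^{Ωs} Ψₗ(−L,s) ds and B₀,ₗ(Ω,t) = ∫_0^t e^{Ωs} Ψₗ(0,s) ds (l = 1,2). Then for every k ∈ ℂ, every Ω ∈ ℂ with Ω² = −(k²+m²), and every t ∈ [0,T]: i m Ψ̂₁(k,0) + (Ω − ik) Ψ̂₂(k,0) + i m e^{ikL} B₋L,₁(Ω,t) − (Ω − ik) e^{ikL} B₋L,₂(Ω,t) − i m e^{Ωt} Ψ̂₁(k,t) − (Ω − ik) e^{Ωt} Ψ̂₂(k,t) − i m B₀,₁(Ω,t) + (Ω − ik) B₀,₂(Ω,t) = 0. -/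
/-!
Multiplying the system by the plane wave `e(x, t) = exp (-i k x + Ω t)` and combining the two
equations with the weights `(i m, Ω - i k)` gives the local relation
`∂ₜ [e (i m Ψ₁ + (Ω - i k) Ψ₂)] + ∂ₓ [e (i m Ψ₁ - (Ω - i k) Ψ₂)] = 0`: the derivative terms cancel
by the equations, and the remaining `Ψ₂` coefficient is `Ω² + k² + m²`, which vanishes on the
dispersion relation. By the divergence theorem on the rectangle `[-L, 0] × [0, t]` the boundary
integral of this closed form is zero, and its four sides are the four pairs of transforms.
-/

open intervalIntegral
open MeasureTheory Set Complex
open scoped Interval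

section Slices

variable {E : Type*} [NormedAddCommGroup E] [NormedSpace ℝ E] {f : ℝ × ℝ → E} {U V : Set ℝ}
  {x y : ℝ}

theorem hasDerivWithinAt_slice_fst (hf : DifferentiableWithinAt ℝ f (U ×ˢ V) (x, y))
    (hy : y ∈ V) :
    HasDerivWithinAt (fun x' => f (x', y)) (fderivWithin ℝ f (U ×ˢ V) (x, y) (1, 0)) U x :=
  hf.hasFDerivWithinAt.comp_hasDerivWithinAt x
    ((hasDerivAt_id x).prodMk (hasDerivAt_const x y)).hasDerivWithinAt
    fun _ hx' => mk_mem_prod hx' hy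

theorem hasDerivWithinAt_slice_snd (hf : DifferentiableWithinAt ℝ f (U ×ˢ V) (x, y))
    (hx : x ∈ U) :
    HasDerivWithinAt (fun y' => f (x, y')) (fderivWithin ℝ f (U ×ˢ V) (x, y) (0, 1)) V y :=
  hf.hasFDerivWithinAt.comp_hasDerivWithinAt y
    ((hasDerivAt_const y x).prodMk (hasDerivAt_id y)).hasDerivWithinAt
    fun _ hy' => mk_mem_prod hx hy'

end Slices

theorem integral_boundary_eq_zero_of_divergence_eq_zero {E : Type*} [NormedAddCommGroup E]
    [NormedSpace ℝ E] [CompleteSpace E] {F G : ℝ × ℝ → E} {F' G' : ℝ × ℝ → ℝ × ℝ →L[ℝ] E}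
    {a b c d : ℝ}
    (hF : ∀ p ∈ [[a, b]] ×ˢ [[c, d]], HasFDerivWithinAt F (F' p) ([[a, b]] ×ˢ [[c, d]]) p)
    (hG : ∀ p ∈ [[a, b]] ×ˢ [[c, d]], HasFDerivWithinAt G (G' p) ([[a, b]] ×ˢ [[c, d]]) p)
    (hdiv : ∀ p ∈ [[a, b]] ×ˢ [[c, d]], G' p (1, 0) + F' p (0, 1) = 0) :
    (∫ x in a..b, F (x, d)) - (∫ x in a..b, F (x, c)) + (∫ y in c..d, G (b, y))
      - ∫ y in c..d, G (a, y) = 0 := by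
  have hnhds : ∀ p ∈ Ioo (min a b) (max a b) ×ˢ Ioo (min c d) (max c d),
      [[a, b]] ×ˢ [[c, d]] ∈ nhds p := fun p hp =>
    prod_mem_nhds (Icc_mem_nhds hp.1.1 hp.1.2) (Icc_mem_nhds hp.2.1 hp.2.2)
  have hi : IntegrableOn (fun p => G' p (1, 0) + F' p (0, 1)) ([[a, b]] ×ˢ [[c, d]]) :=
    integrableOn_zero.congr_fun (fun p hp => (hdiv p hp).symm)
      (measurableSet_uIcc.prod measurableSet_uIcc)
  have hsub : Ioo (min a b) (max a b) ×ˢ Ioo (min c d) (max c d) ⊆ [[a, b]] ×ˢ [[c, d]] :=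
    prod_mono Ioo_subset_Icc_self Ioo_subset_Icc_self
  rw [← integral2_divergence_prod_of_hasFDerivAt G F G' F' a c b d
    (fun p hp => (hG p hp).continuousWithinAt) (fun p hp => (hF p hp).continuousWithinAt)
    (fun p hp => (hG p (hsub hp)).hasFDerivAt (hnhds p hp))
    (fun p hp => (hF p (hsub hp)).hasFDerivAt (hnhds p hp)) hi]
  calc (∫ x in a..b, ∫ y in c..d, G' (x, y) (1, 0) + F' (x, y) (0, 1))
      = ∫ _ in a..b, ∫ _ in c..d, (0 : E) :=
        integral_congr fun x hx => integral_congr fun y hy => hdiv (x, y) ⟨hx, hy⟩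
    _ = 0 := by simp

noncomputable def planeWave (k Ω : ℂ) (p : ℝ × ℝ) : ℂ :=
  cexp (-I * k * p.1 + Ω * p.2)

noncomputable def planeWaveComb (k Ω α β : ℂ) (Ψ₁ Ψ₂ : ℝ × ℝ → ℂ) (p : ℝ × ℝ) : ℂ :=
  planeWave k Ω p * (α * Ψ₁ p + β * Ψ₂ p)

section PlaneWave

variable {k Ω α β : ℂ} {Ψ₁ Ψ₂ : ℝ × ℝ → ℂ}

theorem planeWave_mk_eq_exp_mul_exp (k Ω : ℂ) (x y : ℝ) :
    planeWave k Ω (x, y) = cexp (-I * k * x) * cexp (Ω * y) :=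
  Complex.exp_add _ _

theorem hasDerivAt_planeWave_fst (k Ω : ℂ) (x y : ℝ) :
    HasDerivAt (fun x' : ℝ => planeWave k Ω (x', y)) (-I * k * planeWave k Ω (x, y)) x := by
  have h := (((hasDerivAt_id (x : ℂ)).const_mul (-I * k)).add_const (Ω * y)).cexp.comp_ofReal
  simpa [planeWave, mul_comm] using h

theorem hasDerivAt_planeWave_snd (k Ω : ℂ) (x y : ℝ) :
    HasDerivAt (fun y' : ℝ => planeWave k Ω (x, y')) (Ω * planeWave k Ω (x, y)) y := by
  have h := (((hasDerivAt_id (y : ℂ)).const_mul Ω).const_add (-I * k * x)).cexp.comp_ofReal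
  simpa [planeWave, mul_comm] using h

theorem differentiableWithinAt_planeWaveComb {s : Set (ℝ × ℝ)} {p : ℝ × ℝ}
    (h₁ : DifferentiableWithinAt ℝ Ψ₁ s p) (h₂ : DifferentiableWithinAt ℝ Ψ₂ s p) :
    DifferentiableWithinAt ℝ (planeWaveComb k Ω α β Ψ₁ Ψ₂) s p := by
  unfold planeWaveComb planeWave
  fun_prop

theorem fderivWithin_planeWaveComb_apply_one_zero {U V : Set ℝ} {x y : ℝ}
    (hU : UniqueDiffWithinAt ℝ U x) (hy : y ∈ V)
    (h₁ : DifferentiableWithinAt ℝ Ψ₁ (U ×ˢ V) (x, y))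
    (h₂ : DifferentiableWithinAt ℝ Ψ₂ (U ×ˢ V) (x, y)) :
    fderivWithin ℝ (planeWaveComb k Ω α β Ψ₁ Ψ₂) (U ×ˢ V) (x, y) (1, 0) =
      planeWave k Ω (x, y) * (-I * k * (α * Ψ₁ (x, y) + β * Ψ₂ (x, y))
        + (α * derivWithin (fun x' => Ψ₁ (x', y)) U x
          + β * derivWithin (fun x' => Ψ₂ (x', y)) U x)) := by
  refine hU.eq_deriv _
    (hasDerivWithinAt_slice_fst (differentiableWithinAt_planeWaveComb h₁ h₂) hy) ?_
  have hΨ₁ := (hasDerivWithinAt_slice_fst h₁ hy).differentiableWithinAt.hasDerivWithinAt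
  have hΨ₂ := (hasDerivWithinAt_slice_fst h₂ hy).differentiableWithinAt.hasDerivWithinAt
  exact ((hasDerivAt_planeWave_fst k Ω x y).hasDerivWithinAt.mul
    ((hΨ₁.const_mul α).fun_add (hΨ₂.const_mul β))).congr_deriv (by ring)

theorem fderivWithin_planeWaveComb_apply_zero_one {U V : Set ℝ} {x y : ℝ}
    (hV : UniqueDiffWithinAt ℝ V y) (hx : x ∈ U)
    (h₁ : DifferentiableWithinAt ℝ Ψ₁ (U ×ˢ V) (x, y))
    (h₂ : DifferentiableWithinAt ℝ Ψ₂ (U ×ˢ V) (x, y)) :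
    fderivWithin ℝ (planeWaveComb k Ω α β Ψ₁ Ψ₂) (U ×ˢ V) (x, y) (0, 1) =
      planeWave k Ω (x, y) * (Ω * (α * Ψ₁ (x, y) + β * Ψ₂ (x, y))
        + (α * derivWithin (fun y' => Ψ₁ (x, y')) V y
          + β * derivWithin (fun y' => Ψ₂ (x, y')) V y)) := by
  refine hV.eq_deriv _
    (hasDerivWithinAt_slice_snd (differentiableWithinAt_planeWaveComb h₁ h₂) hx) ?_
  have hΨ₁ := (hasDerivWithinAt_slice_snd h₁ hx).differentiableWithinAt.hasDerivWithinAt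
  have hΨ₂ := (hasDerivWithinAt_slice_snd h₂ hx).differentiableWithinAt.hasDerivWithinAt
  exact ((hasDerivAt_planeWave_snd k Ω x y).hasDerivWithinAt.mul
    ((hΨ₁.const_mul α).fun_add (hΨ₂.const_mul β))).congr_deriv (by ring)

theorem integral_planeWaveComb_fst {a b τ : ℝ} {V : Set ℝ}
    (h₁ : ContinuousOn Ψ₁ ([[a, b]] ×ˢ V)) (h₂ : ContinuousOn Ψ₂ ([[a, b]] ×ˢ V)) (hτ : τ ∈ V) :
    ∫ x in a..b, planeWaveComb k Ω α β Ψ₁ Ψ₂ (x, τ) =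
      cexp (Ω * τ) * (α * (∫ x in a..b, cexp (-I * k * x) * Ψ₁ (x, τ))
        + β * ∫ x in a..b, cexp (-I * k * x) * Ψ₂ (x, τ)) := by
  have hint : ∀ Ψ : ℝ × ℝ → ℂ, ContinuousOn Ψ ([[a, b]] ×ˢ V) →
      IntervalIntegrable (fun x : ℝ => cexp (-I * k * x) * Ψ (x, τ)) volume a b :=
    fun Ψ hΨ => ContinuousOn.intervalIntegrable <| (Continuous.continuousOn (by fun_prop)).mul
      (hΨ.comp (Continuous.continuousOn (by fun_prop)) fun _ hx => mk_mem_prod hx hτ)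
  rw [← intervalIntegral.integral_const_mul, ← intervalIntegral.integral_const_mul,
    ← integral_add ((hint Ψ₁ h₁).const_mul α) ((hint Ψ₂ h₂).const_mul β),
    ← intervalIntegral.integral_const_mul]
  congr 1 with x
  rw [planeWaveComb, planeWave_mk_eq_exp_mul_exp]
  ring

theorem integral_planeWaveComb_snd {c d ξ : ℝ} {U : Set ℝ}
    (h₁ : ContinuousOn Ψ₁ (U ×ˢ [[c, d]])) (h₂ : ContinuousOn Ψ₂ (U ×ˢ [[c, d]])) (hξ : ξ ∈ U) :
    ∫ y in c..d, planeWaveComb k Ω α β Ψ₁ Ψ₂ (ξ, y) =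
      cexp (-I * k * ξ) * (α * (∫ y in c..d, cexp (Ω * y) * Ψ₁ (ξ, y))
        + β * ∫ y in c..d, cexp (Ω * y) * Ψ₂ (ξ, y)) := by
  have hint : ∀ Ψ : ℝ × ℝ → ℂ, ContinuousOn Ψ (U ×ˢ [[c, d]]) →
      IntervalIntegrable (fun y : ℝ => cexp (Ω * y) * Ψ (ξ, y)) volume c d :=
    fun Ψ hΨ => ContinuousOn.intervalIntegrable <| (Continuous.continuousOn (by fun_prop)).mul
      (hΨ.comp (Continuous.continuousOn (by fun_prop)) fun _ hy => mk_mem_prod hξ hy)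
  rw [← intervalIntegral.integral_const_mul, ← intervalIntegral.integral_const_mul,
    ← integral_add ((hint Ψ₁ h₁).const_mul α) ((hint Ψ₂ h₂).const_mul β),
    ← intervalIntegral.integral_const_mul]
  congr 1 with y
  rw [planeWaveComb, planeWave_mk_eq_exp_mul_exp]
  ring

end PlaneWave

theorem dirac_divergence_planeWaveComb_eq_zero {U V : Set ℝ} {x y : ℝ} {k Ω m : ℂ}
    {Ψ₁ Ψ₂ : ℝ × ℝ → ℂ} (hU : UniqueDiffWithinAt ℝ U x) (hV : UniqueDiffWithinAt ℝ V y)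
    (hx : x ∈ U) (hy : y ∈ V) (h₁ : DifferentiableWithinAt ℝ Ψ₁ (U ×ˢ V) (x, y))
    (h₂ : DifferentiableWithinAt ℝ Ψ₂ (U ×ˢ V) (x, y)) (hΩ : Ω ^ 2 = -(k ^ 2 + m ^ 2))
    (pde₁ : I * derivWithin (fun y' => Ψ₁ (x, y')) V y =
      -I * derivWithin (fun x' => Ψ₁ (x', y)) U x + m * Ψ₂ (x, y))
    (pde₂ : I * derivWithin (fun y' => Ψ₂ (x, y')) V y =
      I * derivWithin (fun x' => Ψ₂ (x', y)) U x + m * Ψ₁ (x, y)) :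
    fderivWithin ℝ (planeWaveComb k Ω (I * m) (-(Ω - I * k)) Ψ₁ Ψ₂) (U ×ˢ V) (x, y) (1, 0)
      + fderivWithin ℝ (planeWaveComb k Ω (I * m) (Ω - I * k) Ψ₁ Ψ₂) (U ×ˢ V) (x, y) (0, 1)
      = 0 := by
  rw [fderivWithin_planeWaveComb_apply_one_zero hU hy h₁ h₂,
    fderivWithin_planeWaveComb_apply_zero_one hV hx h₁ h₂]
  set dxΨ₂ := derivWithin (fun x' => Ψ₂ (x', y)) U x
  set dyΨ₂ := derivWithin (fun y' => Ψ₂ (x, y')) V y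
  linear_combination planeWave k Ω (x, y) * (m * pde₁ - I * (Ω - I * k) * pde₂ + Ψ₂ (x, y) * hΩ
    + ((Ω - I * k) * (dyΨ₂ - dxΨ₂) - k ^ 2 * Ψ₂ (x, y)) * I_sq)

theorem massive_dirac_global_relation_left_interval_general
    (L T m : ℝ) (hL : 0 < L) (hT : 0 < T)
    (Ψ₁ Ψ₂ : ℝ × ℝ → ℂ)
    (hΨ₁ : ContDiffOn ℝ 1 Ψ₁ (Set.Icc (-L) 0 ×ˢ Set.Icc 0 T))
    (hΨ₂ : ContDiffOn ℝ 1 Ψ₂ (Set.Icc (-L) 0 ×ˢ Set.Icc 0 T))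
    (pde₁ : ∀ x ∈ Set.Icc (-L) (0:ℝ), ∀ t ∈ Set.Icc (0:ℝ) T,
        Complex.I * derivWithin (fun s : ℝ => Ψ₁ (x, s)) (Set.Icc 0 T) t =
          -Complex.I * derivWithin (fun y : ℝ => Ψ₁ (y, t)) (Set.Icc (-L) 0) x
            + m * Ψ₂ (x, t))
    (pde₂ : ∀ x ∈ Set.Icc (-L) (0:ℝ), ∀ t ∈ Set.Icc (0:ℝ) T,
        Complex.I * derivWithin (fun s : ℝ => Ψ₂ (x, s)) (Set.Icc 0 T) t =
          Complex.I * derivWithin (fun y : ℝ => Ψ₂ (y, t)) (Set.Icc (-L) 0) x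
            + m * Ψ₁ (x, t)) :
    ∀ (k Ω : ℂ), Ω ^ 2 = -(k ^ 2 + m ^ 2) → ∀ t ∈ Set.Icc (0:ℝ) T,
      Complex.I * m * (∫ x in (-L)..(0:ℝ), Complex.exp (-Complex.I * k * x) * Ψ₁ (x, 0))
      + (Ω - Complex.I * k) *
          (∫ x in (-L)..(0:ℝ), Complex.exp (-Complex.I * k * x) * Ψ₂ (x, 0))
      + Complex.I * m * Complex.exp (Complex.I * k * L) *
          (∫ s in (0:ℝ)..t, Complex.exp (Ω * s) * Ψ₁ (-L, s))
      - (Ω - Complex.I * k) * Complex.exp (Complex.I * k * L) *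
          (∫ s in (0:ℝ)..t, Complex.exp (Ω * s) * Ψ₂ (-L, s))
      - Complex.I * m * Complex.exp (Ω * t) *
          (∫ x in (-L)..(0:ℝ), Complex.exp (-Complex.I * k * x) * Ψ₁ (x, t))
      - (Ω - Complex.I * k) * Complex.exp (Ω * t) *
          (∫ x in (-L)..(0:ℝ), Complex.exp (-Complex.I * k * x) * Ψ₂ (x, t))
      - Complex.I * m * (∫ s in (0:ℝ)..t, Complex.exp (Ω * s) * Ψ₁ (0, s))
      + (Ω - Complex.I * k) * (∫ s in (0:ℝ)..t, Complex.exp (Ω * s) * Ψ₂ (0, s)) = 0 := by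
  intro k Ω hΩ t ht
  have hRS : [[-L, (0:ℝ)]] ×ˢ [[0, t]] ⊆ Icc (-L) 0 ×ˢ Icc 0 T := by
    rw [uIcc_of_le (by linarith), uIcc_of_le ht.1]
    exact prod_mono subset_rfl (Icc_subset_Icc_right ht.2)
  set S := Icc (-L) 0 ×ˢ Icc 0 T
  set R := [[-L, (0:ℝ)]] ×ˢ [[0, t]]
  have hd₁ := hΨ₁.differentiableOn one_ne_zero
  have hd₂ := hΨ₂.differentiableOn one_ne_zero
  have hcomb (α β : ℂ) : ∀ p ∈ R, HasFDerivWithinAt (planeWaveComb k Ω α β Ψ₁ Ψ₂)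
      (fderivWithin ℝ (planeWaveComb k Ω α β Ψ₁ Ψ₂) S p) R p := fun p hp =>
    (differentiableWithinAt_planeWaveComb (hd₁ p (hRS hp)) (hd₂ p (hRS hp))).hasFDerivWithinAt.mono
      hRS
  have green := integral_boundary_eq_zero_of_divergence_eq_zero
    (hcomb (I * m) (Ω - I * k)) (hcomb (I * m) (-(Ω - I * k))) fun ⟨x, s⟩ hp => by
      obtain ⟨hx, hs⟩ := hRS hp
      exact dirac_divergence_planeWaveComb_eq_zero (uniqueDiffOn_Icc (by linarith) x hx)
        (uniqueDiffOn_Icc hT s hs) hx hs (hd₁ _ ⟨hx, hs⟩) (hd₂ _ ⟨hx, hs⟩) hΩ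
        (pde₁ x hx s hs) (pde₂ x hx s hs)
  have hc₁ : ContinuousOn Ψ₁ R := hΨ₁.continuousOn.mono hRS
  have hc₂ : ContinuousOn Ψ₂ R := hΨ₂.continuousOn.mono hRS
  rw [integral_planeWaveComb_fst hc₁ hc₂ left_mem_uIcc,
    integral_planeWaveComb_fst hc₁ hc₂ right_mem_uIcc,
    integral_planeWaveComb_snd hc₁ hc₂ left_mem_uIcc,
    integral_planeWaveComb_snd hc₁ hc₂ right_mem_uIcc] at green
  have hexpL : cexp (-I * k * ↑(-L)) = cexp (I * k * L) := by push_cast; ring_nf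
  simp only [hexpL, ofReal_zero, mul_zero, exp_zero, one_mul] at green
  linear_combination -green

/-- Global relation (via Green's theorem) for a continuously differentiable solution of
the massive Dirac system on the rectangle `[-L,0] × [0,T]`, for any branch `Ω` of the
dispersion relation `Ω² = -(k² + m²)`. -/
theorem massive_dirac_global_relation_left_interval
    (L T m : ℝ) (hL : 0 < L) (hT : 0 < T) (hm : 0 < m)
    (Ψ₁ Ψ₂ : ℝ × ℝ → ℂ)
    (hΨ₁ : ContDiffOn ℝ 1 Ψ₁ (Set.Icc (-L) 0 ×ˢ Set.Icc 0 T))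
    (hΨ₂ : ContDiffOn ℝ 1 Ψ₂ (Set.Icc (-L) 0 ×ˢ Set.Icc 0 T))
    (pde₁ : ∀ x ∈ Set.Icc (-L) (0:ℝ), ∀ t ∈ Set.Icc (0:ℝ) T,
        Complex.I * derivWithin (fun s : ℝ => Ψ₁ (x, s)) (Set.Icc 0 T) t =
          -Complex.I * derivWithin (fun y : ℝ => Ψ₁ (y, t)) (Set.Icc (-L) 0) x
            + m * Ψ₂ (x, t))
    (pde₂ : ∀ x ∈ Set.Icc (-L) (0:ℝ), ∀ t ∈ Set.Icc (0:ℝ) T,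
        Complex.I * derivWithin (fun s : ℝ => Ψ₂ (x, s)) (Set.Icc 0 T) t =
          Complex.I * derivWithin (fun y : ℝ => Ψ₂ (y, t)) (Set.Icc (-L) 0) x
            + m * Ψ₁ (x, t)) :
    ∀ (k Ω : ℂ), Ω ^ 2 = -(k ^ 2 + m ^ 2) → ∀ t ∈ Set.Icc (0:ℝ) T,
      Complex.I * m * (∫ x in (-L)..(0:ℝ), Complex.exp (-Complex.I * k * x) * Ψ₁ (x, 0))
      + (Ω - Complex.I * k) *
          (∫ x in (-L)..(0:ℝ), Complex.exp (-Complex.I * k * x) * Ψ₂ (x, 0))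
      + Complex.I * m * Complex.exp (Complex.I * k * L) *
          (∫ s in (0:ℝ)..t, Complex.exp (Ω * s) * Ψ₁ (-L, s))
      - (Ω - Complex.I * k) * Complex.exp (Complex.I * k * L) *
          (∫ s in (0:ℝ)..t, Complex.exp (Ω * s) * Ψ₂ (-L, s))
      - Complex.I * m * Complex.exp (Ω * t) *
          (∫ x in (-L)..(0:ℝ), Complex.exp (-Complex.I * k * x) * Ψ₁ (x, t))
      - (Ω - Complex.I * k) * Complex.exp (Ω * t) *
          (∫ x in (-L)..(0:ℝ), Complex.exp (-Complex.I * k * x) * Ψ₂ (x, t))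
      - Complex.I * m * (∫ s in (0:ℝ)..t, Complex.exp (Ω * s) * Ψ₁ (0, s))
      + (Ω - Complex.I * k) * (∫ s in (0:ℝ)..t, Complex.exp (Ω * s) * Ψ₂ (0, s)) = 0 :=
  massive_dirac_global_relation_left_interval_general L T m hL hT Ψ₁ Ψ₂ hΨ₁ hΨ₂ pde₁ pde₂
end

section
/- Let T > 0, m > 0, and let Ψ₁, Ψ₂ : (−∞,0]×[0,T] → ℂ be continuously differentiable and satisfy i ∂ₜΨ₁ = −i ∂ₓΨ₁ + m Ψ₂ and i ∂ₜΨ₂ = i ∂ₓΨ₂ + m Ψ₁. Assume that Ψₗ(·,s), ∂ₓΨₗ(·,s) and ∂ₜΨₗ(·,s) are integrable on (−∞,0] for each s ∈ [0,T], that Ψₗ(x,s) → 0 as x → −∞ for each s, and that |∂ₜΨₗ(x,s)| is dominated, uniformly for s ∈ [0,T], by an integrable function of x (l = 1,2). For real k and s ∈ [0,T] write Ψ̂ₗ(k,s) = ∫_{−∞}^0 e^{−ikx} Ψₗ(x,s) dx and h₀,ₗ(Ω,t) = ∫_0^t e^{Ωs} Ψₗ(0,s) ds. Then for every k ∈ ℝ,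 every Ω ∈ ℂ with Ω² = −(k²+m²), and every t ∈ [0,T]: (ik − Ω) e^{Ωt} Ψ̂₂(k,t) − i m h₀,₁(Ω,t) − i m e^{Ωt} Ψ̂₁(k,t) + i m Ψ̂₁(k,0) + (Ω − ik) Ψ̂₂(k,0) + (Ω − ik) h₀,₂(Ω,t) = 0. -/
open MeasureTheory Filter intervalIntegral

/-!
Multiplying the Dirac system by `e^{-ikx}` and integrating over `x ≤ 0` turns `∂ₓ` into
multiplication by `ik` plus the boundary value at `x = 0` (integration by parts, using the decay
at `-∞`). So the transforms `Ψ̂₁(k,s)`, `Ψ̂₂(k,s)` solve a linear ODE system in `s` driven by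
`Ψ₁(0,s)`, `Ψ₂(0,s)`; the uniform bound on `∂ₜΨ` justifies differentiating under the integral.
When `Ω² = -(k² + m²)`, the combination `e^{Ωs}(-im Ψ̂₁ + (ik - Ω) Ψ̂₂)` has derivative
`e^{Ωs}(im Ψ₁(0,s) + (ik - Ω) Ψ₂(0,s))`, and integrating over `[0,t]` gives the relation.
-/

section
open Set Complex Topology

/-- The paper's `f̂(k) = ∫_{-∞}^0 e^{-ikx} f(x) dx`. -/
noncomputable def fourierIic (f : ℝ → ℂ) (k : ℝ) : ℂ :=
  ∫ x in Iic (0 : ℝ), cexp (-I * k * x) * f x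

lemma norm_cexp_neg_I_mul (k x : ℝ) : ‖cexp (-I * k * x)‖ = 1 := by
  simp [norm_exp]

lemma hasDerivAt_cexp_mul_ofReal (c : ℂ) (x : ℝ) :
    HasDerivAt (fun y : ℝ => cexp (c * y)) (c * cexp (c * x)) x := by
  simpa [mul_comm] using ((hasDerivAt_id x).ofReal_comp.const_mul c).cexp

lemma MeasureTheory.IntegrableOn.cexp_neg_I_mul {μ : Measure ℝ} {s : Set ℝ} {f : ℝ → ℂ} (k : ℝ)
    (hf : IntegrableOn f s μ) : IntegrableOn (fun x : ℝ => cexp (-I * k * x) * f x) s μ :=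
  Integrable.bdd_mul hf (by fun_prop) (ae_of_all _ fun x => (norm_cexp_neg_I_mul k x).le)

lemma fourierIic_linear_combination {u f g : ℝ → ℂ} {c a b : ℂ} (k : ℝ)
    (hf : IntegrableOn f (Iic 0)) (hg : IntegrableOn g (Iic 0))
    (h : ∀ x ∈ Iic (0 : ℝ), c * u x = a * f x + b * g x) :
    c * fourierIic u k = a * fourierIic f k + b * fourierIic g k := by
  unfold fourierIic
  rw [← MeasureTheory.integral_const_mul, ← MeasureTheory.integral_const_mul,
    ← MeasureTheory.integral_const_mul,
    ← integral_add ((hf.cexp_neg_I_mul k).const_mul a) ((hg.cexp_neg_I_mul k).const_mul b)]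
  refine setIntegral_congr_fun measurableSet_Iic fun x hx => ?_
  linear_combination cexp (-I * k * x) * h x hx

lemma fourierIic_derivWithin {f : ℝ → ℂ} (k : ℝ) (hf : DifferentiableOn ℝ f (Iic 0))
    (hfi : IntegrableOn f (Iic 0)) (hf'i : IntegrableOn (derivWithin f (Iic 0)) (Iic 0))
    (hdecay : Tendsto f atBot (𝓝 0)) :
    fourierIic (derivWithin f (Iic 0)) k = f 0 + I * k * fourierIic f k := by
  set e : ℝ → ℂ := fun x => cexp (-I * k * x)
  have he : ∀ x, HasDerivAt e (-I * k * e x) x := hasDerivAt_cexp_mul_ofReal _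
  have hf' : ∀ x ∈ Iio (0 : ℝ), HasDerivAt f (derivWithin f (Iic 0) x) x := fun x hx =>
    (hf x (Iio_subset_Iic_self hx)).hasDerivWithinAt.hasDerivAt (Iic_mem_nhds hx)
  have hzero : Tendsto (e * f) (𝓝[<] 0) (𝓝 (e 0 * f 0)) :=
    ((he 0).continuousAt.continuousWithinAt.mul
      ((hf 0 (mem_Iic.2 le_rfl)).continuousWithinAt.mono Iio_subset_Iic_self)).tendsto
  have hinfty : Tendsto (e * f) atBot (𝓝 0) := by
    refine squeeze_zero_norm (fun x => ?_) (by simpa using hdecay.norm)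
    rw [Pi.mul_apply, norm_mul, norm_cexp_neg_I_mul, one_mul]
  have hibp := integral_Iic_mul_deriv_eq_deriv_mul (fun x _ => he x) hf'
    (hf'i.cexp_neg_I_mul k) (IntegrableOn.congr_fun ((hfi.cexp_neg_I_mul k).const_mul (-I * k))
      (fun x _ => by simp only [Pi.mul_apply]; ring) measurableSet_Iic) hzero hinfty
  unfold fourierIic
  rw [hibp]
  simp only [e, ofReal_zero, mul_zero, exp_zero, one_mul, sub_zero, mul_assoc,
    MeasureTheory.integral_const_mul]
  ring

lemma DifferentiableOn.comp_prodMk_right {𝕜 E F G : Type*} [NontriviallyNormedField 𝕜]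
    [NormedAddCommGroup E] [NormedSpace 𝕜 E] [NormedAddCommGroup F] [NormedSpace 𝕜 F]
    [NormedAddCommGroup G] [NormedSpace 𝕜 G] {f : E × F → G} {s : Set E} {t : Set F} {y : F}
    (hf : DifferentiableOn 𝕜 f (s ×ˢ t)) (hy : y ∈ t) : DifferentiableOn 𝕜 (fun x => f (x, y)) s :=
  hf.comp (differentiableOn_id.prodMk (differentiableOn_const y)) fun _ hx => ⟨hx, hy⟩

lemma DifferentiableOn.comp_prodMk_left {𝕜 E F G : Type*} [NontriviallyNormedField 𝕜]
    [NormedAddCommGroup E] [NormedSpace 𝕜 E] [NormedAddCommGroup F] [NormedSpace 𝕜 F]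
    [NormedAddCommGroup G] [NormedSpace 𝕜 G] {f : E × F → G} {s : Set E} {t : Set F} {x : E}
    (hf : DifferentiableOn 𝕜 f (s ×ˢ t)) (hx : x ∈ s) : DifferentiableOn 𝕜 (fun y => f (x, y)) t :=
  hf.comp ((differentiableOn_const x).prodMk differentiableOn_id) fun _ hy => ⟨hx, hy⟩

lemma mul_fourierIic_eq_of_eqOn {u f φ : ℝ → ℂ} {c a b : ℂ} (k : ℝ)
    (hf : DifferentiableOn ℝ f (Iic 0)) (hfi : IntegrableOn f (Iic 0))
    (hf'i : IntegrableOn (derivWithin f (Iic 0)) (Iic 0)) (hdecay : Tendsto f atBot (𝓝 0))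
    (hφ : IntegrableOn φ (Iic 0))
    (h : ∀ x ∈ Iic (0 : ℝ), c * u x = a * derivWithin f (Iic 0) x + b * φ x) :
    c * fourierIic u k = a * (f 0 + I * k * fourierIic f k) + b * fourierIic φ k := by
  rw [fourierIic_linear_combination k hf'i hφ h, fourierIic_derivWithin k hf hfi hf'i hdecay]

section ParametricIntegral

variable {α E : Type*} [MeasurableSpace α] {μ : Measure α} [NormedAddCommGroup E]
  [NormedSpace ℝ E] {F F' : ℝ → α → E} {g : α → ℝ} {a b : ℝ}

lemma ae_norm_le_add_of_norm_deriv_le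
    (hF : ∀ᵐ x ∂μ, ∀ s ∈ Icc a b, HasDerivWithinAt (F · x) (F' s x) (Icc a b) s)
    (hF' : ∀ᵐ x ∂μ, ∀ s ∈ Icc a b, ‖F' s x‖ ≤ g x) :
    ∀ s ∈ Icc a b, ∀ᵐ x ∂μ, ‖F s x‖ ≤ ‖F a x‖ + g x * (b - a) := by
  intro s hs
  filter_upwards [hF, hF'] with x hFx hF'x
  have hmvt := norm_image_sub_le_of_norm_deriv_le_segment' hFx
    (fun r hr => hF'x r (Ico_subset_Icc_self hr)) s hs
  calc ‖F s x‖ ≤ ‖F a x‖ + ‖F s x - F a x‖ := norm_le_insert' _ _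
    _ ≤ ‖F a x‖ + g x * (b - a) := by
      gcongr
      exact hmvt.trans (mul_le_mul_of_nonneg_left (by linarith [hs.2])
        ((norm_nonneg _).trans (hF'x s hs)))

lemma continuousOn_integral_of_norm_deriv_le
    (hF_meas : ∀ s ∈ Icc a b, AEStronglyMeasurable (F s) μ)
    (hFa : Integrable (F a) μ) (hg : Integrable g μ)
    (hF : ∀ᵐ x ∂μ, ∀ s ∈ Icc a b, HasDerivWithinAt (F · x) (F' s x) (Icc a b) s)
    (hF' : ∀ᵐ x ∂μ, ∀ s ∈ Icc a b, ‖F' s x‖ ≤ g x) :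
    ContinuousOn (fun s => ∫ x, F s x ∂μ) (Icc a b) :=
  continuousOn_of_dominated hF_meas (ae_norm_le_add_of_norm_deriv_le hF hF')
    (hFa.norm.add (hg.mul_const _))
    (hF.mono fun _ hFx s hs => (hFx s hs).continuousWithinAt)

lemma hasDerivAt_integral_of_norm_deriv_le
    (hF_meas : ∀ s ∈ Icc a b, AEStronglyMeasurable (F s) μ)
    (hFa : Integrable (F a) μ) (hg : Integrable g μ)
    (hF : ∀ᵐ x ∂μ, ∀ s ∈ Icc a b, HasDerivWithinAt (F · x) (F' s x) (Icc a b) s)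
    (hF' : ∀ᵐ x ∂μ, ∀ s ∈ Icc a b, ‖F' s x‖ ≤ g x)
    (hF'_meas : ∀ s ∈ Ioo a b, AEStronglyMeasurable (F' s) μ) {s : ℝ} (hs : s ∈ Ioo a b) :
    HasDerivAt (fun s => ∫ x, F s x ∂μ) (∫ x, F' s x ∂μ) s := by
  have hIoo : Ioo a b ∈ 𝓝 s := Ioo_mem_nhds hs.1 hs.2
  refine (hasDerivAt_integral_of_dominated_loc_of_deriv_le hIoo
    (eventually_of_mem hIoo fun r hr => hF_meas r (Ioo_subset_Icc_self hr))
    ((hFa.norm.add (hg.mul_const (b - a))).mono' (hF_meas s (Ioo_subset_Icc_self hs))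
      (ae_norm_le_add_of_norm_deriv_le hF hF' s (Ioo_subset_Icc_self hs)))
    (hF'_meas s hs) (hF'.mono fun _ h r hr => h r (Ioo_subset_Icc_self hr)) hg
    (hF.mono fun _ h r hr => (h r (Ioo_subset_Icc_self hr)).hasDerivAt
      (Icc_mem_nhds hr.1 hr.2))).2

end ParametricIntegral

section Slices

variable {T : ℝ} {Ψ : ℝ × ℝ → ℂ} {g : ℝ → ℝ}

lemma aestronglyMeasurable_cexp_mul_slice (k : ℝ) (hΨ : DifferentiableOn ℝ Ψ (Iic 0 ×ˢ Icc 0 T))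
    {s : ℝ} (hs : s ∈ Icc 0 T) :
    AEStronglyMeasurable (fun x : ℝ => cexp (-I * k * x) * Ψ (x, s)) (volume.restrict (Iic 0)) :=
  ((Continuous.continuousOn (by fun_prop)).mul
    (hΨ.comp_prodMk_right hs).continuousOn).aestronglyMeasurable measurableSet_Iic

lemma ae_hasDerivWithinAt_cexp_mul_slice (k : ℝ)
    (hΨ : DifferentiableOn ℝ Ψ (Iic 0 ×ˢ Icc 0 T)) :
    ∀ᵐ x : ℝ ∂volume.restrict (Iic 0), ∀ s ∈ Icc 0 T,
      HasDerivWithinAt (fun s : ℝ => cexp (-I * k * x) * Ψ (x, s))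
        (cexp (-I * k * x) * derivWithin (fun r => Ψ (x, r)) (Icc 0 T) s) (Icc 0 T) s :=
  ae_restrict_of_forall_mem measurableSet_Iic fun _ hx s hs =>
    ((hΨ.comp_prodMk_left hx s hs).hasDerivWithinAt).const_mul _

lemma ae_norm_cexp_mul_deriv_slice_le (k : ℝ)
    (hbound : ∀ s ∈ Icc 0 T, ∀ x ∈ Iic (0 : ℝ),
      ‖derivWithin (fun r => Ψ (x, r)) (Icc 0 T) s‖ ≤ g x) :
    ∀ᵐ x : ℝ ∂volume.restrict (Iic 0), ∀ s ∈ Icc 0 T,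
      ‖cexp (-I * k * x) * derivWithin (fun r => Ψ (x, r)) (Icc 0 T) s‖ ≤ g x :=
  ae_restrict_of_forall_mem measurableSet_Iic fun x hx s hs => by
    rw [norm_mul, norm_cexp_neg_I_mul, one_mul]
    exact hbound s hs x hx

lemma continuousOn_fourierIic_slice (k : ℝ) (hΨ : DifferentiableOn ℝ Ψ (Iic 0 ×ˢ Icc 0 T))
    (hΨ0 : IntegrableOn (fun x => Ψ (x, 0)) (Iic 0)) (hg : IntegrableOn g (Iic 0))
    (hbound : ∀ s ∈ Icc 0 T, ∀ x ∈ Iic (0 : ℝ),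
      ‖derivWithin (fun r => Ψ (x, r)) (Icc 0 T) s‖ ≤ g x) :
    ContinuousOn (fun s => fourierIic (fun x => Ψ (x, s)) k) (Icc 0 T) :=
  continuousOn_integral_of_norm_deriv_le (fun _ hs => aestronglyMeasurable_cexp_mul_slice k hΨ hs)
    (hΨ0.cexp_neg_I_mul k) hg (ae_hasDerivWithinAt_cexp_mul_slice k hΨ)
    (ae_norm_cexp_mul_deriv_slice_le k hbound)

lemma hasDerivAt_fourierIic_slice (k : ℝ) (hΨ : DifferentiableOn ℝ Ψ (Iic 0 ×ˢ Icc 0 T))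
    (hΨ0 : IntegrableOn (fun x => Ψ (x, 0)) (Iic 0))
    (hΨt : ∀ s ∈ Ioo 0 T, AEStronglyMeasurable
      (fun x => derivWithin (fun r => Ψ (x, r)) (Icc 0 T) s) (volume.restrict (Iic 0)))
    (hg : IntegrableOn g (Iic 0))
    (hbound : ∀ s ∈ Icc 0 T, ∀ x ∈ Iic (0 : ℝ),
      ‖derivWithin (fun r => Ψ (x, r)) (Icc 0 T) s‖ ≤ g x)
    {s : ℝ} (hs : s ∈ Ioo 0 T) :
    HasDerivAt (fun s => fourierIic (fun x => Ψ (x, s)) k)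
      (fourierIic (fun x => derivWithin (fun r => Ψ (x, r)) (Icc 0 T) s) k) s :=
  hasDerivAt_integral_of_norm_deriv_le (fun _ hs => aestronglyMeasurable_cexp_mul_slice k hΨ hs)
    (hΨ0.cexp_neg_I_mul k) hg (ae_hasDerivWithinAt_cexp_mul_slice k hΨ)
    (ae_norm_cexp_mul_deriv_slice_le k hbound)
    (fun r hr => ((by fun_prop : Continuous fun x : ℝ => cexp (-I * k * x))
      |>.aestronglyMeasurable).mul (hΨt r hr)) hs

end Slices

lemma global_relation_of_transformed_system {T : ℝ} {k m Ω : ℂ} {F₁ F₂ D₁ D₂ b₁ b₂ : ℝ → ℂ}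
    (hΩ : Ω ^ 2 = -(k ^ 2 + m ^ 2))
    (hF₁ : ContinuousOn F₁ (Icc 0 T)) (hF₂ : ContinuousOn F₂ (Icc 0 T))
    (hD₁ : ∀ s ∈ Ioo 0 T, HasDerivAt F₁ (D₁ s) s) (hD₂ : ∀ s ∈ Ioo 0 T, HasDerivAt F₂ (D₂ s) s)
    (hb₁ : ContinuousOn b₁ (Icc 0 T)) (hb₂ : ContinuousOn b₂ (Icc 0 T))
    (sys₁ : ∀ s ∈ Ioo 0 T, I * D₁ s = -I * (b₁ s + I * k * F₁ s) + m * F₂ s)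
    (sys₂ : ∀ s ∈ Ioo 0 T, I * D₂ s = I * (b₂ s + I * k * F₂ s) + m * F₁ s)
    {t : ℝ} (ht : t ∈ Icc 0 T) :
    (I * k - Ω) * cexp (Ω * t) * F₂ t - I * m * (∫ s in (0 : ℝ)..t, cexp (Ω * s) * b₁ s)
      - I * m * cexp (Ω * t) * F₁ t + I * m * F₁ 0 + (Ω - I * k) * F₂ 0
      + (Ω - I * k) * (∫ s in (0 : ℝ)..t, cexp (Ω * s) * b₂ s) = 0 := by
  have hsub : Icc 0 t ⊆ Icc 0 T := Icc_subset_Icc_right ht.2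
  have hexp : Continuous fun s : ℝ => cexp (Ω * s) := by fun_prop
  have hderiv : ∀ s ∈ Ioo 0 t,
      HasDerivAt (fun s : ℝ => cexp (Ω * s) * (-I * m * F₁ s + (I * k - Ω) * F₂ s))
        (I * m * (cexp (Ω * s) * b₁ s) + (I * k - Ω) * (cexp (Ω * s) * b₂ s)) s := by
    intro s hs
    have hsT : s ∈ Ioo 0 T := ⟨hs.1, hs.2.trans_le ht.2⟩
    refine ((hasDerivAt_cexp_mul_ofReal Ω s).mul (((hD₁ s hsT).const_mul _).add
      ((hD₂ s hsT).const_mul _))).congr_deriv ?_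
    simp only [Pi.add_apply]
    -- the `F₂`-terms cancel by the dispersion relation
    linear_combination (-m * cexp (Ω * s)) * sys₁ s hsT
      + (-I * (I * k - Ω) * cexp (Ω * s)) * sys₂ s hsT - cexp (Ω * s) * F₂ s * hΩ
      + cexp (Ω * s) * ((I * k - Ω) * (D₂ s - b₂ s) + F₂ s * (Ω * I * k + k ^ 2 * (1 - I ^ 2)))
        * I_sq
  have hint₁ : IntervalIntegrable (fun s => cexp (Ω * s) * b₁ s) volume 0 t :=
    (hexp.continuousOn.mul (hb₁.mono hsub)).intervalIntegrable_of_Icc ht.1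
  have hint₂ : IntervalIntegrable (fun s => cexp (Ω * s) * b₂ s) volume 0 t :=
    (hexp.continuousOn.mul (hb₂.mono hsub)).intervalIntegrable_of_Icc ht.1
  have hftc := integral_eq_sub_of_hasDerivAt_of_le ht.1
    (hexp.continuousOn.mul (((hF₁.mono hsub).const_mul _).add ((hF₂.mono hsub).const_mul _)))
    hderiv ((hint₁.const_mul _).add (hint₂.const_mul _))
  rw [intervalIntegral.integral_add (hint₁.const_mul _) (hint₂.const_mul _),
    intervalIntegral.integral_const_mul, intervalIntegral.integral_const_mul] at hftc
  simp only [Pi.mul_apply, Pi.add_apply, ofReal_zero, mul_zero, exp_zero, one_mul] at hftc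
  linear_combination -hftc

end

theorem massive_dirac_global_relation_neg_halfline_general
    (T m : ℝ)
    (Ψ₁ Ψ₂ : ℝ × ℝ → ℂ)
    (hΨ₁ : ContDiffOn ℝ 1 Ψ₁ (Set.Iic 0 ×ˢ Set.Icc 0 T))
    (hΨ₂ : ContDiffOn ℝ 1 Ψ₂ (Set.Iic 0 ×ˢ Set.Icc 0 T))
    (pde₁ : ∀ x ∈ Set.Iic (0:ℝ), ∀ t ∈ Set.Icc (0:ℝ) T,
        Complex.I * derivWithin (fun s : ℝ => Ψ₁ (x, s)) (Set.Icc 0 T) t =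
          -Complex.I * derivWithin (fun y : ℝ => Ψ₁ (y, t)) (Set.Iic 0) x
            + m * Ψ₂ (x, t))
    (pde₂ : ∀ x ∈ Set.Iic (0:ℝ), ∀ t ∈ Set.Icc (0:ℝ) T,
        Complex.I * derivWithin (fun s : ℝ => Ψ₂ (x, s)) (Set.Icc 0 T) t =
          Complex.I * derivWithin (fun y : ℝ => Ψ₂ (y, t)) (Set.Iic 0) x
            + m * Ψ₁ (x, t))
    (hint : ∀ Ψ ∈ [Ψ₁, Ψ₂], ∀ s ∈ Set.Icc (0:ℝ) T,
        IntegrableOn (fun x => Ψ (x, s)) (Set.Iic 0) ∧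
        IntegrableOn (fun x => derivWithin (fun y : ℝ => Ψ (y, s)) (Set.Iic 0) x)
          (Set.Iic 0) ∧
        IntegrableOn (fun x => derivWithin (fun r : ℝ => Ψ (x, r)) (Set.Icc 0 T) s)
          (Set.Iic 0))
    (hdecay : ∀ Ψ ∈ [Ψ₁, Ψ₂], ∀ s ∈ Set.Icc (0:ℝ) T,
        Tendsto (fun x => Ψ (x, s)) atBot (nhds 0))
    (hdom : ∀ Ψ ∈ [Ψ₁, Ψ₂], ∃ g : ℝ → ℝ, IntegrableOn g (Set.Iic 0) ∧
        ∀ s ∈ Set.Icc (0:ℝ) T, ∀ x ∈ Set.Iic (0:ℝ),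
          ‖derivWithin (fun r : ℝ => Ψ (x, r)) (Set.Icc 0 T) s‖ ≤ g x) :
    ∀ (k : ℝ) (Ω : ℂ), Ω ^ 2 = -((k:ℂ) ^ 2 + (m:ℂ) ^ 2) → ∀ t ∈ Set.Icc (0:ℝ) T,
      (Complex.I * k - Ω) * Complex.exp (Ω * t) *
          (∫ x in Set.Iic (0:ℝ), Complex.exp (-Complex.I * k * x) * Ψ₂ (x, t))
      - Complex.I * m * (∫ s in (0:ℝ)..t, Complex.exp (Ω * s) * Ψ₁ (0, s))
      - Complex.I * m * Complex.exp (Ω * t) *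
          (∫ x in Set.Iic (0:ℝ), Complex.exp (-Complex.I * k * x) * Ψ₁ (x, t))
      + Complex.I * m *
          (∫ x in Set.Iic (0:ℝ), Complex.exp (-Complex.I * k * x) * Ψ₁ (x, 0))
      + (Ω - Complex.I * k) *
          (∫ x in Set.Iic (0:ℝ), Complex.exp (-Complex.I * k * x) * Ψ₂ (x, 0))
      + (Ω - Complex.I * k) * (∫ s in (0:ℝ)..t, Complex.exp (Ω * s) * Ψ₂ (0, s)) = 0 := by
  intro k Ω hΩ t ht
  have mem₁ : Ψ₁ ∈ [Ψ₁, Ψ₂] := by simp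
  have mem₂ : Ψ₂ ∈ [Ψ₁, Ψ₂] := by simp
  obtain ⟨g₁, hg₁, hbound₁⟩ := hdom Ψ₁ mem₁
  obtain ⟨g₂, hg₂, hbound₂⟩ := hdom Ψ₂ mem₂
  have hΨ₁' := hΨ₁.differentiableOn one_ne_zero
  have hΨ₂' := hΨ₂.differentiableOn one_ne_zero
  have h0 : (0 : ℝ) ∈ Set.Icc 0 T := ⟨le_rfl, ht.1.trans ht.2⟩
  have hx0 : (0 : ℝ) ∈ Set.Iic 0 := Set.mem_Iic.2 le_rfl
  refine global_relation_of_transformed_system (F₁ := fun s => fourierIic (fun x => Ψ₁ (x, s)) k)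
    (F₂ := fun s => fourierIic (fun x => Ψ₂ (x, s)) k) hΩ
    (continuousOn_fourierIic_slice k hΨ₁' (hint Ψ₁ mem₁ 0 h0).1 hg₁ hbound₁)
    (continuousOn_fourierIic_slice k hΨ₂' (hint Ψ₂ mem₂ 0 h0).1 hg₂ hbound₂)
    (fun s => hasDerivAt_fourierIic_slice k hΨ₁' (hint Ψ₁ mem₁ 0 h0).1
      (fun r hr => (hint Ψ₁ mem₁ r (Set.Ioo_subset_Icc_self hr)).2.2.aestronglyMeasurable)
      hg₁ hbound₁)
    (fun s => hasDerivAt_fourierIic_slice k hΨ₂' (hint Ψ₂ mem₂ 0 h0).1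
      (fun r hr => (hint Ψ₂ mem₂ r (Set.Ioo_subset_Icc_self hr)).2.2.aestronglyMeasurable)
      hg₂ hbound₂)
    (hΨ₁'.comp_prodMk_left hx0).continuousOn (hΨ₂'.comp_prodMk_left hx0).continuousOn
    (fun s hs => ?_) (fun s hs => ?_) ht
  · have hs' := Set.Ioo_subset_Icc_self hs
    exact mul_fourierIic_eq_of_eqOn k (hΨ₁'.comp_prodMk_right hs') (hint Ψ₁ mem₁ s hs').1
      (hint Ψ₁ mem₁ s hs').2.1 (hdecay Ψ₁ mem₁ s hs') (hint Ψ₂ mem₂ s hs').1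
      fun x hx => pde₁ x hx s hs'
  · have hs' := Set.Ioo_subset_Icc_self hs
    exact mul_fourierIic_eq_of_eqOn k (hΨ₂'.comp_prodMk_right hs') (hint Ψ₂ mem₂ s hs').1
      (hint Ψ₂ mem₂ s hs').2.1 (hdecay Ψ₂ mem₂ s hs') (hint Ψ₁ mem₁ s hs').1
      fun x hx => pde₂ x hx s hs'

/-- Global relation for a continuously differentiable, decaying solution of the massive
Dirac system on the negative half-line `(-∞,0]` up to time `T`, for any branch `Ω` of
the dispersion relation `Ω² = -(k² + m²)`. -/
theorem massive_dirac_global_relation_neg_halfline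
    (T m : ℝ) (hT : 0 < T) (hm : 0 < m)
    (Ψ₁ Ψ₂ : ℝ × ℝ → ℂ)
    (hΨ₁ : ContDiffOn ℝ 1 Ψ₁ (Set.Iic 0 ×ˢ Set.Icc 0 T))
    (hΨ₂ : ContDiffOn ℝ 1 Ψ₂ (Set.Iic 0 ×ˢ Set.Icc 0 T))
    (pde₁ : ∀ x ∈ Set.Iic (0:ℝ), ∀ t ∈ Set.Icc (0:ℝ) T,
        Complex.I * derivWithin (fun s : ℝ => Ψ₁ (x, s)) (Set.Icc 0 T) t =
          -Complex.I * derivWithin (fun y : ℝ => Ψ₁ (y, t)) (Set.Iic 0) x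
            + m * Ψ₂ (x, t))
    (pde₂ : ∀ x ∈ Set.Iic (0:ℝ), ∀ t ∈ Set.Icc (0:ℝ) T,
        Complex.I * derivWithin (fun s : ℝ => Ψ₂ (x, s)) (Set.Icc 0 T) t =
          Complex.I * derivWithin (fun y : ℝ => Ψ₂ (y, t)) (Set.Iic 0) x
            + m * Ψ₁ (x, t))
    (hint : ∀ Ψ ∈ [Ψ₁, Ψ₂], ∀ s ∈ Set.Icc (0:ℝ) T,
        IntegrableOn (fun x => Ψ (x, s)) (Set.Iic 0) ∧
        IntegrableOn (fun x => derivWithin (fun y : ℝ => Ψ (y, s)) (Set.Iic 0) x)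
          (Set.Iic 0) ∧
        IntegrableOn (fun x => derivWithin (fun r : ℝ => Ψ (x, r)) (Set.Icc 0 T) s)
          (Set.Iic 0))
    (hdecay : ∀ Ψ ∈ [Ψ₁, Ψ₂], ∀ s ∈ Set.Icc (0:ℝ) T,
        Tendsto (fun x => Ψ (x, s)) atBot (nhds 0))
    (hdom : ∀ Ψ ∈ [Ψ₁, Ψ₂], ∃ g : ℝ → ℝ, IntegrableOn g (Set.Iic 0) ∧
        ∀ s ∈ Set.Icc (0:ℝ) T, ∀ x ∈ Set.Iic (0:ℝ),
          ‖derivWithin (fun r : ℝ => Ψ (x, r)) (Set.Icc 0 T) s‖ ≤ g x) :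
    ∀ (k : ℝ) (Ω : ℂ), Ω ^ 2 = -((k:ℂ) ^ 2 + (m:ℂ) ^ 2) → ∀ t ∈ Set.Icc (0:ℝ) T,
      (Complex.I * k - Ω) * Complex.exp (Ω * t) *
          (∫ x in Set.Iic (0:ℝ), Complex.exp (-Complex.I * k * x) * Ψ₂ (x, t))
      - Complex.I * m * (∫ s in (0:ℝ)..t, Complex.exp (Ω * s) * Ψ₁ (0, s))
      - Complex.I * m * Complex.exp (Ω * t) *
          (∫ x in Set.Iic (0:ℝ), Complex.exp (-Complex.I * k * x) * Ψ₁ (x, t))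
      + Complex.I * m *
          (∫ x in Set.Iic (0:ℝ), Complex.exp (-Complex.I * k * x) * Ψ₁ (x, 0))
      + (Ω - Complex.I * k) *
          (∫ x in Set.Iic (0:ℝ), Complex.exp (-Complex.I * k * x) * Ψ₂ (x, 0))
      + (Ω - Complex.I * k) * (∫ s in (0:ℝ)..t, Complex.exp (Ω * s) * Ψ₂ (0, s)) = 0 :=
  massive_dirac_global_relation_neg_halfline_general T m Ψ₁ Ψ₂ hΨ₁ hΨ₂ pde₁ pde₂ hint hdecay hdom
end

section
/- Let T > 0, m > 0, and let Ψ₁, Ψ₂ : [0,∞)×[0,T] → ℂ be continuously differentiable and satisfy i ∂ₜΨ₁ = −i ∂ₓΨ₁ + m Ψ₂ and i ∂ₜΨ₂ = i ∂ₓΨ₂ + m Ψ₁. Assume that Ψₗ(·,s), ∂ₓΨₗ(·,s) and ∂ₜΨₗ(·,s) are integrable on [0,∞) for each s ∈ [0,T], that Ψₗ(x,s) → 0 as x → +∞ for each s, and that |∂ₜΨₗ(x,s)| is dominated, uniformly for s ∈ [0,T], by an integrable function of x (l = 1,2). For real k and s ∈ [0,T] write Ψ̂ₗ(k,s) = ∫_0^∞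 e^{−ikx} Ψₗ(x,s) dx and h₀,ₗ(Ω,t) = ∫_0^t e^{Ωs} Ψₗ(0,s) ds. Then for every k ∈ ℝ, every Ω ∈ ℂ with Ω² = −(k²+m²), and every t ∈ [0,T]: (ik − Ω) e^{Ωt} Ψ̂₂(k,t) + i m h₀,₁(Ω,t) − i m e^{Ωt} Ψ̂₁(k,t) + i m Ψ̂₁(k,0) + (Ω − ik) Ψ̂₂(k,0) + (ik − Ω) h₀,₂(Ω,t) = 0. -/
/-!
Write `Ψ̂ₗ(s)` for the half-line Fourier transform of `Ψₗ(·, s)`. Differentiating under the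
integral sign (justified by the dominating function) and integrating by parts in `x`, which
produces the boundary values `Ψₗ(0, s)`, turns the Dirac system into the linear ODE system
`Ψ̂₁' = Ψ₁(0,s) - ik Ψ̂₁ - im Ψ̂₂`, `Ψ̂₂' = -Ψ₂(0,s) + ik Ψ̂₂ - im Ψ̂₁`.
On the dispersion relation `Ω² = -(k² + m²)` the bulk terms cancel in the derivative of
`e^{Ωs} ((ik - Ω) Ψ̂₂ - im Ψ̂₁)`, which is therefore `-e^{Ωs} ((ik - Ω) Ψ₂(0,s) + im Ψ₁(0,s))`;
integrating over `[0, t]` gives the global relation.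
-/

open MeasureTheory Filter Set Complex Topology

noncomputable def halfLineFourier (f : ℝ → ℂ) (k : ℝ) : ℂ :=
  ∫ x in Ici (0 : ℝ), exp (-I * k * x) * f x

theorem norm_exp_neg_I_mul_mul (k x : ℝ) : ‖exp (-I * k * x)‖ = 1 := by
  rw [show -I * k * x = ((-(k * x) : ℝ) : ℂ) * I by push_cast; ring]
  exact norm_exp_ofReal_mul_I _

theorem continuous_exp_neg_I_mul_mul (k : ℝ) : Continuous fun x : ℝ => exp (-I * k * x) := by
  fun_prop

theorem MeasureTheory.IntegrableOn.exp_neg_I_mul_mul {f : ℝ → ℂ} {s : Set ℝ} (k : ℝ)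
    (hf : IntegrableOn f s) :
    IntegrableOn (fun x : ℝ => exp (-I * k * x) * f x) s :=
  hf.bdd_mul (continuous_exp_neg_I_mul_mul k).aestronglyMeasurable
    (ae_of_all _ fun x => (norm_exp_neg_I_mul_mul k x).le)

theorem halfLineFourier_eq_of_mul_I_eq {w f g : ℝ → ℂ} (k : ℝ) (c d : ℂ)
    (hw : ∀ x ∈ Ici (0 : ℝ), I * w x = c * f x + d * g x)
    (hf : IntegrableOn f (Ici 0)) (hg : IntegrableOn g (Ici 0)) :
    halfLineFourier w k = -I * (c * halfLineFourier f k + d * halfLineFourier g k) := by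
  have hw' : EqOn (fun x : ℝ => exp (-I * k * x) * w x)
      (fun x : ℝ => -I * c * (exp (-I * k * x) * f x) + -I * d * (exp (-I * k * x) * g x))
      (Ici 0) := fun x hx => by
    linear_combination (-I * exp (-I * k * x)) * hw x hx + exp (-I * k * x) * w x * I_mul_I
  rw [halfLineFourier, setIntegral_congr_fun measurableSet_Ici hw',
    integral_add ((hf.exp_neg_I_mul_mul k).const_mul _)
      ((hg.exp_neg_I_mul_mul k).const_mul _),
    integral_const_mul, integral_const_mul,
    halfLineFourier, halfLineFourier]
  ring

theorem halfLineFourier_derivWithin {f : ℝ → ℂ} (k : ℝ) (hf : DifferentiableOn ℝ f (Ici 0))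
    (hfi : IntegrableOn f (Ici 0)) (hf'i : IntegrableOn (derivWithin f (Ici 0)) (Ici 0))
    (hlim : Tendsto f atTop (𝓝 0)) :
    halfLineFourier (derivWithin f (Ici 0)) k = -f 0 + I * k * halfLineFourier f k := by
  set e : ℝ → ℂ := fun x => exp (-I * k * x)
  have he : ∀ x : ℝ, HasDerivAt e (-I * k * e x) x := fun x => by
    simpa [e, mul_comm] using (((hasDerivAt_id (x : ℂ)).const_mul (-I * k)).comp_ofReal).cexp
  have hf' : ∀ x ∈ Ioi (0 : ℝ), HasDerivAt f (derivWithin f (Ici 0) x) x := fun x hx =>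
    (hf x (mem_Ici.2 hx.le)).hasDerivWithinAt.hasDerivAt (Ici_mem_nhds hx)
  have hlim0 : Tendsto (e * f) (𝓝[>] 0) (𝓝 (f 0)) := by
    have : ContinuousWithinAt (e * f) (Ici 0) 0 :=
      (continuous_exp_neg_I_mul_mul k).continuousWithinAt.mul (hf 0 self_mem_Ici).continuousWithinAt
    simpa [e] using (this.mono Ioi_subset_Ici_self).tendsto
  have hlimTop : Tendsto (e * f) atTop (𝓝 0) := by
    rw [tendsto_zero_iff_norm_tendsto_zero] at hlim ⊢
    simpa only [e, Pi.mul_apply, norm_mul, norm_exp_neg_I_mul_mul, one_mul] using hlim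
  have hfi' : IntegrableOn (fun x => -I * k * e x * f x) (Ioi 0) := by
    simpa only [IntegrableOn, mul_assoc, e] using
      ((hfi.mono_set Ioi_subset_Ici_self).exp_neg_I_mul_mul k).const_mul (-I * k)
  have hibp := integral_Ioi_mul_deriv_eq_deriv_mul (fun x _ => he x) hf'
    ((hf'i.mono_set Ioi_subset_Ici_self).exp_neg_I_mul_mul k) hfi' hlim0 hlimTop
  have hpull : ∫ x in Ioi 0, -I * k * e x * f x = -I * k * ∫ x in Ioi 0, e x * f x := by
    simp_rw [mul_assoc (-I * (k : ℂ))]; exact integral_const_mul _ _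
  rw [halfLineFourier, halfLineFourier, integral_Ici_eq_integral_Ioi, integral_Ici_eq_integral_Ioi,
    hibp, hpull]
  ring

theorem hasDerivAt_halfLineFourier {u u' : ℝ → ℝ → ℂ} {g : ℝ → ℝ} {U : Set ℝ} {s₀ : ℝ} (k : ℝ)
    (hU : U ∈ 𝓝 s₀)
    (hu_meas : ∀ s ∈ U, AEStronglyMeasurable (u s) (volume.restrict (Ici 0)))
    (hu_int : IntegrableOn (u s₀) (Ici 0))
    (hu'_meas : AEStronglyMeasurable (u' s₀) (volume.restrict (Ici 0)))
    (hg : IntegrableOn g (Ici 0)) (hbound : ∀ x ∈ Ici (0 : ℝ), ∀ s ∈ U, ‖u' s x‖ ≤ g x)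
    (hderiv : ∀ x ∈ Ici (0 : ℝ), ∀ s ∈ U, HasDerivAt (u · x) (u' s x) s) :
    HasDerivAt (fun s => halfLineFourier (u s) k) (halfLineFourier (u' s₀) k) s₀ := by
  have he := (continuous_exp_neg_I_mul_mul k).aestronglyMeasurable (μ := volume.restrict (Ici 0))
  refine (hasDerivAt_integral_of_dominated_loc_of_deriv_le (bound := g)
    (F' := fun s x => exp (-I * k * x) * u' s x) hU
    (eventually_of_mem hU fun s hs => he.mul (hu_meas s hs)) (hu_int.exp_neg_I_mul_mul k)
    (he.mul hu'_meas) ?_ hg ?_).2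
  · filter_upwards [ae_restrict_mem measurableSet_Ici] with x hx s hs
    rw [norm_mul, norm_exp_neg_I_mul_mul, one_mul]
    exact hbound x hx s hs
  · filter_upwards [ae_restrict_mem measurableSet_Ici] with x hx s hs
    exact (hderiv x hx s hs).const_mul _

theorem continuousOn_halfLineFourier {u : ℝ → ℝ → ℂ} {g : ℝ → ℝ} {S : Set ℝ} (k : ℝ)
    (hu_meas : ∀ s ∈ S, AEStronglyMeasurable (u s) (volume.restrict (Ici 0)))
    (hg : IntegrableOn g (Ici 0)) (hbound : ∀ s ∈ S, ∀ x ∈ Ici (0 : ℝ), ‖u s x‖ ≤ g x)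
    (hcont : ∀ x ∈ Ici (0 : ℝ), ContinuousOn (u · x) S) :
    ContinuousOn (fun s => halfLineFourier (u s) k) S := by
  have he := (continuous_exp_neg_I_mul_mul k).aestronglyMeasurable (μ := volume.restrict (Ici 0))
  refine continuousOn_of_dominated (fun s hs => he.mul (hu_meas s hs)) (fun s hs => ?_) hg ?_
  · filter_upwards [ae_restrict_mem measurableSet_Ici] with x hx
    rw [norm_mul, norm_exp_neg_I_mul_mul, one_mul]
    exact hbound s hs x hx
  · filter_upwards [ae_restrict_mem measurableSet_Ici] with x hx
    exact continuousOn_const.mul (hcont x hx)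

section TimeSlices

variable {T : ℝ} {Ψ : ℝ × ℝ → ℂ}

theorem ContDiffOn.space_slice (hΨ : ContDiffOn ℝ 1 Ψ (Ici 0 ×ˢ Icc 0 T)) {s : ℝ}
    (hs : s ∈ Icc 0 T) : ContDiffOn ℝ 1 (fun x => Ψ (x, s)) (Ici 0) :=
  hΨ.comp (contDiff_id.prodMk contDiff_const).contDiffOn fun _ hx => mk_mem_prod hx hs

theorem ContDiffOn.time_slice (hΨ : ContDiffOn ℝ 1 Ψ (Ici 0 ×ˢ Icc 0 T)) {x : ℝ}
    (hx : x ∈ Ici 0) : ContDiffOn ℝ 1 (fun s => Ψ (x, s)) (Icc 0 T) :=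
  hΨ.comp (contDiff_const.prodMk contDiff_id).contDiffOn fun _ hs => mk_mem_prod hx hs

theorem ContDiffOn.hasDerivWithinAt_time_slice (hΨ : ContDiffOn ℝ 1 Ψ (Ici 0 ×ˢ Icc 0 T))
    {x s : ℝ} (hx : x ∈ Ici 0) (hs : s ∈ Icc 0 T) :
    HasDerivWithinAt (fun r => Ψ (x, r)) (derivWithin (fun r => Ψ (x, r)) (Icc 0 T) s)
      (Icc 0 T) s :=
  ((hΨ.time_slice hx).differentiableOn one_ne_zero s hs).hasDerivWithinAt

theorem hasDerivAt_halfLineFourier_time_slice {g : ℝ → ℝ} {s₀ : ℝ} (k : ℝ)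
    (hΨ : ContDiffOn ℝ 1 Ψ (Ici 0 ×ˢ Icc 0 T)) (hs₀ : s₀ ∈ Ioo 0 T)
    (hint : IntegrableOn (fun x => Ψ (x, s₀)) (Ici 0))
    (hint' : IntegrableOn (fun x => derivWithin (fun r => Ψ (x, r)) (Icc 0 T) s₀) (Ici 0))
    (hg : IntegrableOn g (Ici 0))
    (hdom : ∀ s ∈ Icc 0 T, ∀ x ∈ Ici (0 : ℝ), ‖derivWithin (fun r => Ψ (x, r)) (Icc 0 T) s‖ ≤ g x) :
    HasDerivAt (fun s => halfLineFourier (fun x => Ψ (x, s)) k)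
      (halfLineFourier (fun x => derivWithin (fun r => Ψ (x, r)) (Icc 0 T) s₀) k) s₀ :=
  hasDerivAt_halfLineFourier (u := fun s x => Ψ (x, s)) k (Ioo_mem_nhds hs₀.1 hs₀.2)
    (fun _ hs => ((hΨ.space_slice (Ioo_subset_Icc_self hs)).continuousOn.aestronglyMeasurable
      measurableSet_Ici))
    hint hint'.aestronglyMeasurable hg
    (fun x hx _ hs => hdom _ (Ioo_subset_Icc_self hs) x hx)
    (fun _ hx _ hs => (hΨ.hasDerivWithinAt_time_slice hx (Ioo_subset_Icc_self hs)).hasDerivAt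
      (Icc_mem_nhds hs.1 hs.2))

theorem continuousOn_halfLineFourier_time_slice {g : ℝ → ℝ} (k : ℝ) (hT : 0 ≤ T)
    (hΨ : ContDiffOn ℝ 1 Ψ (Ici 0 ×ˢ Icc 0 T))
    (hint : IntegrableOn (fun x => Ψ (x, 0)) (Ici 0)) (hg : IntegrableOn g (Ici 0))
    (hdom : ∀ s ∈ Icc 0 T, ∀ x ∈ Ici (0 : ℝ), ‖derivWithin (fun r => Ψ (x, r)) (Icc 0 T) s‖ ≤ g x) :
    ContinuousOn (fun s => halfLineFourier (fun x => Ψ (x, s)) k) (Icc 0 T) := by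
  refine continuousOn_halfLineFourier (u := fun s x => Ψ (x, s))
    (g := fun x => ‖Ψ (x, 0)‖ + g x * T) k (fun s hs => (hΨ.space_slice hs).continuousOn.aestronglyMeasurable measurableSet_Ici)
    (hint.norm.add (hg.mul_const T)) (fun s hs x hx => ?_)
    (fun x hx => (hΨ.time_slice hx).continuousOn)
  have hmvt := norm_image_sub_le_of_norm_deriv_le_segment'
    (fun r hr => hΨ.hasDerivWithinAt_time_slice hx hr)
    (fun r hr => hdom r (Ico_subset_Icc_self hr) x hx) s hs
  have hg0 : 0 ≤ g x := (norm_nonneg _).trans (hdom 0 ⟨le_rfl, hT⟩ x hx)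
  calc ‖Ψ (x, s)‖ ≤ ‖Ψ (x, 0)‖ + ‖Ψ (x, s) - Ψ (x, 0)‖ := norm_le_insert' _ _
    _ ≤ ‖Ψ (x, 0)‖ + g x * T := by
      gcongr; exact hmvt.trans (by gcongr; linarith [hs.2])

theorem hasDerivAt_halfLineFourier_of_transport {Φ : ℝ × ℝ → ℂ} {g : ℝ → ℝ} {s : ℝ}
    (k : ℝ) (c d : ℂ) (hΨ : ContDiffOn ℝ 1 Ψ (Ici 0 ×ˢ Icc 0 T))
    (hpde : ∀ x ∈ Ici (0 : ℝ), I * derivWithin (fun r => Ψ (x, r)) (Icc 0 T) s =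
      c * derivWithin (fun y => Ψ (y, s)) (Ici 0) x + d * Φ (x, s))
    (hs : s ∈ Ioo 0 T)
    (hint : IntegrableOn (fun x => Ψ (x, s)) (Ici 0) ∧
      IntegrableOn (fun x => derivWithin (fun y => Ψ (y, s)) (Ici 0) x) (Ici 0) ∧
      IntegrableOn (fun x => derivWithin (fun r => Ψ (x, r)) (Icc 0 T) s) (Ici 0))
    (hdecay : Tendsto (fun x => Ψ (x, s)) atTop (𝓝 0))
    (hg : IntegrableOn g (Ici 0))
    (hdom : ∀ s ∈ Icc 0 T, ∀ x ∈ Ici (0 : ℝ), ‖derivWithin (fun r => Ψ (x, r)) (Icc 0 T) s‖ ≤ g x)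
    (hΦ : IntegrableOn (fun x => Φ (x, s)) (Ici 0)) :
    HasDerivAt (fun s => halfLineFourier (fun x => Ψ (x, s)) k)
      (-I * (c * (-Ψ (0, s) + I * k * halfLineFourier (fun x => Ψ (x, s)) k)
        + d * halfLineFourier (fun x => Φ (x, s)) k)) s := by
  obtain ⟨hΨi, hΨx, hΨt⟩ := hint
  have hsT := Ioo_subset_Icc_self hs
  rw [← halfLineFourier_derivWithin k ((hΨ.space_slice hsT).differentiableOn one_ne_zero) hΨi hΨx
    hdecay, ← halfLineFourier_eq_of_mul_I_eq k c d hpde hΨx hΦ]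
  exact hasDerivAt_halfLineFourier_time_slice k hΨ hs hΨi hΨt hg hdom

end TimeSlices

theorem dirac_global_relation_of_hasDerivAt {a b β₁ β₂ : ℝ → ℂ} {k m t : ℝ} {Ω : ℂ}
    (hΩ : Ω ^ 2 = -((k : ℂ) ^ 2 + (m : ℂ) ^ 2)) (ht : 0 ≤ t)
    (ha : ContinuousOn a (Icc 0 t)) (hb : ContinuousOn b (Icc 0 t))
    (hβ₁ : ContinuousOn β₁ (Icc 0 t)) (hβ₂ : ContinuousOn β₂ (Icc 0 t))
    (ha' : ∀ s ∈ Ioo 0 t, HasDerivAt a (β₁ s - I * k * a s - I * m * b s) s)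
    (hb' : ∀ s ∈ Ioo 0 t, HasDerivAt b (-β₂ s + I * k * b s - I * m * a s) s) :
    (I * k - Ω) * exp (Ω * t) * b t + I * m * (∫ s in (0 : ℝ)..t, exp (Ω * s) * β₁ s)
      - I * m * exp (Ω * t) * a t + I * m * a 0 + (Ω - I * k) * b 0
      + (I * k - Ω) * (∫ s in (0 : ℝ)..t, exp (Ω * s) * β₂ s) = 0 := by
  have hexp : ∀ s : ℝ, HasDerivAt (fun r : ℝ => exp (Ω * r)) (exp (Ω * s) * Ω) s := fun s => by
    simpa using ((hasDerivAt_id (s : ℂ)).const_mul Ω).comp_ofReal.cexp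
  have hexpc : ContinuousOn (fun r : ℝ => exp (Ω * r)) (Icc 0 t) := by fun_prop
  have hG : ∀ s ∈ Ioo 0 t, HasDerivAt (fun r : ℝ => exp (Ω * r) * ((I * k - Ω) * b r - I * m * a r))
      (-(I * k - Ω) * (exp (Ω * s) * β₂ s) - I * m * (exp (Ω * s) * β₁ s)) s := fun s hs => by
    refine ((hexp s).mul (((hb' s hs).const_mul _).sub ((ha' s hs).const_mul _))).congr_deriv ?_
    simp only [Pi.sub_apply]
    linear_combination -exp (Ω * s) * b s * hΩ + exp (Ω * s) * (b s * (k ^ 2 + m ^ 2)) * I_mul_I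
  have hi₁ : IntervalIntegrable (fun s : ℝ => exp (Ω * s) * β₁ s) volume 0 t :=
    (hexpc.mul hβ₁).intervalIntegrable_of_Icc ht
  have hi₂ : IntervalIntegrable (fun s : ℝ => exp (Ω * s) * β₂ s) volume 0 t :=
    (hexpc.mul hβ₂).intervalIntegrable_of_Icc ht
  have hFTC := intervalIntegral.integral_eq_sub_of_hasDeriv_right_of_le
    (f := fun r : ℝ => exp (Ω * r) * ((I * k - Ω) * b r - I * m * a r)) ht
    (hexpc.mul ((continuousOn_const.mul hb).sub (continuousOn_const.mul ha)))
    (fun s hs => (hG s hs).hasDerivWithinAt) ((hi₂.const_mul _).sub (hi₁.const_mul _))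
  rw [intervalIntegral.integral_sub (hi₂.const_mul _) (hi₁.const_mul _),
    intervalIntegral.integral_const_mul, intervalIntegral.integral_const_mul] at hFTC
  simp only [ofReal_zero, mul_zero, exp_zero, one_mul] at hFTC
  linear_combination -hFTC

theorem massive_dirac_global_relation_pos_halfline_general
    (T m : ℝ)
    (Ψ₁ Ψ₂ : ℝ × ℝ → ℂ)
    (hΨ₁ : ContDiffOn ℝ 1 Ψ₁ (Set.Ici 0 ×ˢ Set.Icc 0 T))
    (hΨ₂ : ContDiffOn ℝ 1 Ψ₂ (Set.Ici 0 ×ˢ Set.Icc 0 T))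
    (pde₁ : ∀ x ∈ Set.Ici (0:ℝ), ∀ t ∈ Set.Icc (0:ℝ) T,
        Complex.I * derivWithin (fun s : ℝ => Ψ₁ (x, s)) (Set.Icc 0 T) t =
          -Complex.I * derivWithin (fun y : ℝ => Ψ₁ (y, t)) (Set.Ici 0) x
            + m * Ψ₂ (x, t))
    (pde₂ : ∀ x ∈ Set.Ici (0:ℝ), ∀ t ∈ Set.Icc (0:ℝ) T,
        Complex.I * derivWithin (fun s : ℝ => Ψ₂ (x, s)) (Set.Icc 0 T) t =
          Complex.I * derivWithin (fun y : ℝ => Ψ₂ (y, t)) (Set.Ici 0) x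
            + m * Ψ₁ (x, t))
    (hint : ∀ Ψ ∈ [Ψ₁, Ψ₂], ∀ s ∈ Set.Icc (0:ℝ) T,
        IntegrableOn (fun x => Ψ (x, s)) (Set.Ici 0) ∧
        IntegrableOn (fun x => derivWithin (fun y : ℝ => Ψ (y, s)) (Set.Ici 0) x)
          (Set.Ici 0) ∧
        IntegrableOn (fun x => derivWithin (fun r : ℝ => Ψ (x, r)) (Set.Icc 0 T) s)
          (Set.Ici 0))
    (hdecay : ∀ Ψ ∈ [Ψ₁, Ψ₂], ∀ s ∈ Set.Icc (0:ℝ) T,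
        Tendsto (fun x => Ψ (x, s)) atTop (nhds 0))
    (hdom : ∀ Ψ ∈ [Ψ₁, Ψ₂], ∃ g : ℝ → ℝ, IntegrableOn g (Set.Ici 0) ∧
        ∀ s ∈ Set.Icc (0:ℝ) T, ∀ x ∈ Set.Ici (0:ℝ),
          ‖derivWithin (fun r : ℝ => Ψ (x, r)) (Set.Icc 0 T) s‖ ≤ g x) :
    ∀ (k : ℝ) (Ω : ℂ), Ω ^ 2 = -((k:ℂ) ^ 2 + (m:ℂ) ^ 2) → ∀ t ∈ Set.Icc (0:ℝ) T,
      (Complex.I * k - Ω) * Complex.exp (Ω * t) *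
          (∫ x in Set.Ici (0:ℝ), Complex.exp (-Complex.I * k * x) * Ψ₂ (x, t))
      + Complex.I * m * (∫ s in (0:ℝ)..t, Complex.exp (Ω * s) * Ψ₁ (0, s))
      - Complex.I * m * Complex.exp (Ω * t) *
          (∫ x in Set.Ici (0:ℝ), Complex.exp (-Complex.I * k * x) * Ψ₁ (x, t))
      + Complex.I * m *
          (∫ x in Set.Ici (0:ℝ), Complex.exp (-Complex.I * k * x) * Ψ₁ (x, 0))
      + (Ω - Complex.I * k) *
          (∫ x in Set.Ici (0:ℝ), Complex.exp (-Complex.I * k * x) * Ψ₂ (x, 0))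
      + (Complex.I * k - Ω) * (∫ s in (0:ℝ)..t, Complex.exp (Ω * s) * Ψ₂ (0, s)) = 0 := by
  intro k Ω hΩ t ht
  have hT : 0 ≤ T := ht.1.trans ht.2
  have hsub : Icc 0 t ⊆ Icc 0 T := Icc_subset_Icc_right ht.2
  have hint₁ := hint Ψ₁ (by simp)
  have hint₂ := hint Ψ₂ (by simp)
  have h0 : (0 : ℝ) ∈ Icc 0 T := ⟨le_rfl, hT⟩
  obtain ⟨g₁, hg₁, hdom₁⟩ := hdom Ψ₁ (by simp)
  obtain ⟨g₂, hg₂, hdom₂⟩ := hdom Ψ₂ (by simp)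
  refine dirac_global_relation_of_hasDerivAt (a := fun s => halfLineFourier (fun x => Ψ₁ (x, s)) k)
    (b := fun s => halfLineFourier (fun x => Ψ₂ (x, s)) k) hΩ ht.1
    ((continuousOn_halfLineFourier_time_slice k hT hΨ₁ (hint₁ 0 h0).1 hg₁ hdom₁).mono hsub)
    ((continuousOn_halfLineFourier_time_slice k hT hΨ₂ (hint₂ 0 h0).1 hg₂ hdom₂).mono hsub)
    ((hΨ₁.time_slice self_mem_Ici).continuousOn.mono hsub)
    ((hΨ₂.time_slice self_mem_Ici).continuousOn.mono hsub) (fun s hs => ?_) (fun s hs => ?_)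
  all_goals
    have hsT : s ∈ Ioo 0 T := Ioo_subset_Ioo_right ht.2 hs
    have hsT' : s ∈ Icc 0 T := Ioo_subset_Icc_self hsT
  · refine (hasDerivAt_halfLineFourier_of_transport k _ _ hΨ₁ (fun x hx => pde₁ x hx s hsT') hsT
      (hint₁ s hsT') (hdecay Ψ₁ (by simp) s hsT') hg₁ hdom₁ (hint₂ s hsT').1).congr_deriv ?_
    linear_combination (-Ψ₁ (0, s) + I * k * halfLineFourier (fun x => Ψ₁ (x, s)) k) * I_mul_I
  · refine (hasDerivAt_halfLineFourier_of_transport k _ _ hΨ₂ (fun x hx => pde₂ x hx s hsT') hsT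
      (hint₂ s hsT') (hdecay Ψ₂ (by simp) s hsT') hg₂ hdom₂ (hint₁ s hsT').1).congr_deriv ?_
    linear_combination -(-Ψ₂ (0, s) + I * k * halfLineFourier (fun x => Ψ₂ (x, s)) k) * I_mul_I

/-- Global relation for a continuously differentiable, decaying solution of the massive
Dirac system on the positive half-line `[0,∞)` up to time `T`, for any branch `Ω` of
the dispersion relation `Ω² = -(k² + m²)`. -/
theorem massive_dirac_global_relation_pos_halfline
    (T m : ℝ) (hT : 0 < T) (hm : 0 < m)
    (Ψ₁ Ψ₂ : ℝ × ℝ → ℂ)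
    (hΨ₁ : ContDiffOn ℝ 1 Ψ₁ (Set.Ici 0 ×ˢ Set.Icc 0 T))
    (hΨ₂ : ContDiffOn ℝ 1 Ψ₂ (Set.Ici 0 ×ˢ Set.Icc 0 T))
    (pde₁ : ∀ x ∈ Set.Ici (0:ℝ), ∀ t ∈ Set.Icc (0:ℝ) T,
        Complex.I * derivWithin (fun s : ℝ => Ψ₁ (x, s)) (Set.Icc 0 T) t =
          -Complex.I * derivWithin (fun y : ℝ => Ψ₁ (y, t)) (Set.Ici 0) x
            + m * Ψ₂ (x, t))
    (pde₂ : ∀ x ∈ Set.Ici (0:ℝ), ∀ t ∈ Set.Icc (0:ℝ) T,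
        Complex.I * derivWithin (fun s : ℝ => Ψ₂ (x, s)) (Set.Icc 0 T) t =
          Complex.I * derivWithin (fun y : ℝ => Ψ₂ (y, t)) (Set.Ici 0) x
            + m * Ψ₁ (x, t))
    (hint : ∀ Ψ ∈ [Ψ₁, Ψ₂], ∀ s ∈ Set.Icc (0:ℝ) T,
        IntegrableOn (fun x => Ψ (x, s)) (Set.Ici 0) ∧
        IntegrableOn (fun x => derivWithin (fun y : ℝ => Ψ (y, s)) (Set.Ici 0) x)
          (Set.Ici 0) ∧
        IntegrableOn (fun x => derivWithin (fun r : ℝ => Ψ (x, r)) (Set.Icc 0 T) s)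
          (Set.Ici 0))
    (hdecay : ∀ Ψ ∈ [Ψ₁, Ψ₂], ∀ s ∈ Set.Icc (0:ℝ) T,
        Tendsto (fun x => Ψ (x, s)) atTop (nhds 0))
    (hdom : ∀ Ψ ∈ [Ψ₁, Ψ₂], ∃ g : ℝ → ℝ, IntegrableOn g (Set.Ici 0) ∧
        ∀ s ∈ Set.Icc (0:ℝ) T, ∀ x ∈ Set.Ici (0:ℝ),
          ‖derivWithin (fun r : ℝ => Ψ (x, r)) (Set.Icc 0 T) s‖ ≤ g x) :
    ∀ (k : ℝ) (Ω : ℂ), Ω ^ 2 = -((k:ℂ) ^ 2 + (m:ℂ) ^ 2) → ∀ t ∈ Set.Icc (0:ℝ) T,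
      (Complex.I * k - Ω) * Complex.exp (Ω * t) *
          (∫ x in Set.Ici (0:ℝ), Complex.exp (-Complex.I * k * x) * Ψ₂ (x, t))
      + Complex.I * m * (∫ s in (0:ℝ)..t, Complex.exp (Ω * s) * Ψ₁ (0, s))
      - Complex.I * m * Complex.exp (Ω * t) *
          (∫ x in Set.Ici (0:ℝ), Complex.exp (-Complex.I * k * x) * Ψ₁ (x, t))
      + Complex.I * m *
          (∫ x in Set.Ici (0:ℝ), Complex.exp (-Complex.I * k * x) * Ψ₁ (x, 0))
      + (Ω - Complex.I * k) *
          (∫ x in Set.Ici (0:ℝ), Complex.exp (-Complex.I * k * x) * Ψ₂ (x, 0))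
      + (Complex.I * k - Ω) * (∫ s in (0:ℝ)..t, Complex.exp (Ω * s) * Ψ₂ (0, s)) = 0 :=
  massive_dirac_global_relation_pos_halfline_general T m Ψ₁ Ψ₂ hΨ₁ hΨ₂ pde₁ pde₂ hint hdecay hdom
end

section
/- Let L > 0, T > 0 and let Ψ₁, Ψ₂ : [−L,0]×[0,T] → ℂ be continuously differentiable with ∂ₜΨ₁ + ∂ₓΨ₁ = 0 and ∂ₜΨ₂ − ∂ₓΨ₂ = 0 (the massless Dirac system i ∂ₜΨ₁ = −i ∂ₓΨ₁, i ∂ₜΨ₂ = i ∂ₓΨ₂). Then for every k ∈ ℂ and every t ∈ [0,T]: (i) ∫_{−L}^0 e^{−ikx} Ψ₁(x,0) dx + e^{ikL} ∫_0^t e^{iks} Ψ₁(−L,s) ds − e^{ikt} ∫_{−L}^0 e^{−ikx} Ψ₁(x,t) dx − ∫_0^t e^{iks} Ψ₁(0,s) ds = 0; and (ii) ∫_{−L}^0 e^{−ikx} Ψ₂(x,0) dx − e^{ikL} ∫_0^t e^{−iks} Ψ₂(−L,s) ds − e^{−ikt} ∫_{−L}^0 e^{−ikx} Ψ₂(x,t)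 dx + ∫_0^t e^{−iks} Ψ₂(0,s) ds = 0. -/
/-!
Each component solves a transport equation `∂ₜΨ + c ∂ₓΨ = 0` (with `c = 1` and `c = -1`).
For the weight `w = exp (-ikx + cikt)` one has `∂ₓ (c w Ψ) + ∂ₜ (w Ψ) = w (∂ₜΨ + c ∂ₓΨ) = 0`, so
the divergence theorem on the rectangle `[-L, 0] × [0, t]` says that the flux of `(c w Ψ, w Ψ)`
through its boundary vanishes; written out side by side, this flux is the global relation.
-/

open MeasureTheory Set Filter Topology Complex

theorem integral_boundary_prod_Icc_eq_zero_of_divergence_eq_zero {E : Type*}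
    [NormedAddCommGroup E] [NormedSpace ℝ E] [CompleteSpace E]
    (f g : ℝ × ℝ → E) (f' g' : ℝ × ℝ → ℝ × ℝ →L[ℝ] E) {a b : ℝ × ℝ} (hle : a ≤ b)
    (hf : ContinuousOn f (Icc a b)) (hg : ContinuousOn g (Icc a b))
    (hf' : ∀ p ∈ Ioo a.1 b.1 ×ˢ Ioo a.2 b.2, HasFDerivAt f (f' p) p)
    (hg' : ∀ p ∈ Ioo a.1 b.1 ×ˢ Ioo a.2 b.2, HasFDerivAt g (g' p) p)
    (hdiv : ∀ p ∈ Ioo a.1 b.1 ×ˢ Ioo a.2 b.2, f' p (1, 0) + g' p (0, 1) = 0) :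
    (((∫ x in a.1..b.1, g (x, b.2)) - ∫ x in a.1..b.1, g (x, a.2)) +
        ∫ y in a.2..b.2, f (b.1, y)) - ∫ y in a.2..b.2, f (a.1, y) = 0 := by
  have hinterior : interior (Icc a b) = Ioo a.1 b.1 ×ˢ Ioo a.2 b.2 := by
    rw [Icc_prod_eq, interior_prod_eq, interior_Icc, interior_Icc]
  have hdiv_ae : (fun p => f' p (1, 0) + g' p (0, 1)) =ᵐ[volume.restrict (Icc a b)] 0 := by
    rw [Measure.restrict_congr_set
      (interior_ae_eq_of_null_frontier ((convex_Icc a b).addHaar_frontier volume)).symm]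
    exact ae_restrict_of_forall_mem measurableSet_interior (hinterior ▸ hdiv)
  rw [← integral_divergence_prod_Icc_of_hasFDerivAt_of_le f g f' g' a b hle hf hg hf' hg'
    (integrableOn_zero.congr_fun_ae hdiv_ae.symm), integral_congr_ae hdiv_ae]
  exact integral_zero _ _

theorem HasFDerivAt.derivWithin_comp_prodMk_left {E : Type*} [NormedAddCommGroup E]
    [NormedSpace ℝ E] {Ψ : ℝ × ℝ → E} {Ψ' : ℝ × ℝ →L[ℝ] E} {p : ℝ × ℝ} {s : Set ℝ}
    (h : HasFDerivAt Ψ Ψ' p) (hs : s ∈ 𝓝 p.1) :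
    derivWithin (fun x => Ψ (x, p.2)) s p.1 = Ψ' (1, 0) := by
  rw [derivWithin_of_mem_nhds hs]
  exact (h.comp_hasDerivAt p.1 ((hasDerivAt_id p.1).prodMk (hasDerivAt_const p.1 p.2))).deriv

theorem HasFDerivAt.derivWithin_comp_prodMk_right {E : Type*} [NormedAddCommGroup E]
    [NormedSpace ℝ E] {Ψ : ℝ × ℝ → E} {Ψ' : ℝ × ℝ →L[ℝ] E} {p : ℝ × ℝ} {s : Set ℝ}
    (h : HasFDerivAt Ψ Ψ' p) (hs : s ∈ 𝓝 p.2) :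
    derivWithin (fun t => Ψ (p.1, t)) s p.2 = Ψ' (0, 1) := by
  rw [derivWithin_of_mem_nhds hs]
  exact (h.comp_hasDerivAt p.2 ((hasDerivAt_const p.2 p.1).prodMk (hasDerivAt_id p.2))).deriv

noncomputable def transportPhase (k c : ℂ) : ℝ × ℝ →L[ℝ] ℂ :=
  (-I * k) • (ofRealCLM.comp (ContinuousLinearMap.fst ℝ ℝ ℝ)) +
    (c * I * k) • (ofRealCLM.comp (ContinuousLinearMap.snd ℝ ℝ ℝ))

theorem exp_transportPhase (k c : ℂ) (x t : ℝ) :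
    exp (transportPhase k c (x, t)) = exp (-I * k * x) * exp (c * I * k * t) := by
  simp [transportPhase, exp_add]

theorem transport_global_relation {Ψ : ℝ × ℝ → ℂ} {Ψ' : ℝ × ℝ → ℝ × ℝ →L[ℝ] ℂ} (k c : ℂ)
    {a b : ℝ × ℝ} (hle : a ≤ b) (hΨ : ContinuousOn Ψ (Icc a b))
    (hΨ' : ∀ p ∈ Ioo a.1 b.1 ×ˢ Ioo a.2 b.2, HasFDerivAt Ψ (Ψ' p) p)
    (hpde : ∀ p ∈ Ioo a.1 b.1 ×ˢ Ioo a.2 b.2, Ψ' p (0, 1) + c * Ψ' p (1, 0) = 0) :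
    exp (c * I * k * b.2) * (∫ x in a.1..b.1, exp (-I * k * x) * Ψ (x, b.2))
      - exp (c * I * k * a.2) * (∫ x in a.1..b.1, exp (-I * k * x) * Ψ (x, a.2))
      + c * (exp (-I * k * b.1) * (∫ t in a.2..b.2, exp (c * I * k * t) * Ψ (b.1, t))
        - exp (-I * k * a.1) * (∫ t in a.2..b.2, exp (c * I * k * t) * Ψ (a.1, t))) = 0 := by
  set φ := transportPhase k c
  have hweight : ∀ p, HasFDerivAt (fun p => exp (φ p)) (exp (φ p) • φ) p :=
    fun p => φ.hasFDerivAt.cexp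
  have hdensity : ∀ p ∈ Ioo a.1 b.1 ×ˢ Ioo a.2 b.2, HasFDerivAt (fun p => exp (φ p) * Ψ p)
      (exp (φ p) • Ψ' p + Ψ p • exp (φ p) • φ) p :=
    fun p hp => (hweight p).mul (hΨ' p hp)
  have hdensity_cont : ContinuousOn (fun p => exp (φ p) * Ψ p) (Icc a b) :=
    φ.continuous.cexp.continuousOn.mul hΨ
  have hflux := integral_boundary_prod_Icc_eq_zero_of_divergence_eq_zero
    (fun p => c * (exp (φ p) * Ψ p)) (fun p => exp (φ p) * Ψ p) _ _ hle
    (continuousOn_const.mul hdensity_cont) hdensity_cont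
    (fun p hp => (hdensity p hp).const_mul c) hdensity
    (fun p hp => by
      have hφ₁ : φ (1, 0) = -I * k := by simp [φ, transportPhase]
      have hφ₂ : φ (0, 1) = c * I * k := by simp [φ, transportPhase]
      -- the derivative of the weight cancels between the two components
      simp only [smul_apply, add_apply, smul_eq_mul, hφ₁, hφ₂]
      linear_combination exp (φ p) * hpde p hp)
  have hx : ∀ t : ℝ, ∫ x in a.1..b.1, exp (φ (x, t)) * Ψ (x, t)
      = exp (c * I * k * t) * ∫ x in a.1..b.1, exp (-I * k * x) * Ψ (x, t) := by
    intro t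
    rw [← intervalIntegral.integral_const_mul]
    congr 1 with x
    rw [exp_transportPhase]; ring
  have ht : ∀ x : ℝ, ∫ t in a.2..b.2, c * (exp (φ (x, t)) * Ψ (x, t))
      = c * (exp (-I * k * x) * ∫ t in a.2..b.2, exp (c * I * k * t) * Ψ (x, t)) := by
    intro x
    rw [← intervalIntegral.integral_const_mul, ← intervalIntegral.integral_const_mul]
    congr 1 with t
    rw [exp_transportPhase]; ring
  rw [hx, hx, ht, ht] at hflux
  linear_combination hflux

theorem transport_global_relation_of_derivWithin {Ψ : ℝ × ℝ → ℂ} (k c : ℂ) {a₁ b₁ a₂ b₂ t : ℝ}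
    (hab : a₁ ≤ b₁) (ht : t ∈ Icc a₂ b₂)
    (hΨ : DifferentiableOn ℝ Ψ (Icc a₁ b₁ ×ˢ Icc a₂ b₂))
    (hpde : ∀ x ∈ Icc a₁ b₁, ∀ s ∈ Icc a₂ b₂,
      derivWithin (fun s => Ψ (x, s)) (Icc a₂ b₂) s
        + c * derivWithin (fun y => Ψ (y, s)) (Icc a₁ b₁) x = 0) :
    exp (c * I * k * t) * (∫ x in a₁..b₁, exp (-I * k * x) * Ψ (x, t))
      - exp (c * I * k * a₂) * (∫ x in a₁..b₁, exp (-I * k * x) * Ψ (x, a₂))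
      + c * (exp (-I * k * b₁) * (∫ s in a₂..t, exp (c * I * k * s) * Ψ (b₁, s))
        - exp (-I * k * a₁) * (∫ s in a₂..t, exp (c * I * k * s) * Ψ (a₁, s))) = 0 := by
  have hsub : Ioo a₁ b₁ ×ˢ Ioo a₂ t ⊆ Icc a₁ b₁ ×ˢ Icc a₂ b₂ :=
    prod_mono Ioo_subset_Icc_self (Ioo_subset_Icc_self.trans (Icc_subset_Icc_right ht.2))
  have hnhds : ∀ p ∈ Ioo a₁ b₁ ×ˢ Ioo a₂ t,
      Icc a₁ b₁ ∈ 𝓝 p.1 ∧ Icc a₂ b₂ ∈ 𝓝 p.2 := fun p hp =>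
    ⟨Icc_mem_nhds hp.1.1 hp.1.2, Icc_mem_nhds hp.2.1 (hp.2.2.trans_le ht.2)⟩
  have hderiv : ∀ p ∈ Ioo a₁ b₁ ×ˢ Ioo a₂ t, HasFDerivAt Ψ (fderiv ℝ Ψ p) p := fun p hp =>
    ((hΨ p (hsub hp)).differentiableAt
      (prod_mem_nhds (hnhds p hp).1 (hnhds p hp).2)).hasFDerivAt
  refine transport_global_relation (a := (a₁, a₂)) (b := (b₁, t)) k c ⟨hab, ht.1⟩
    (hΨ.continuousOn.mono ?_) hderiv fun p hp => ?_
  · rw [Icc_prod_eq]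
    exact prod_mono subset_rfl (Icc_subset_Icc_right ht.2)
  · have := hpde p.1 (Ioo_subset_Icc_self hp.1) p.2 ((hsub hp).2)
    rwa [(hderiv p hp).derivWithin_comp_prodMk_right (hnhds p hp).2,
      (hderiv p hp).derivWithin_comp_prodMk_left (hnhds p hp).1] at this

theorem massless_dirac_global_relations_finite_interval_general
    (L T : ℝ) (hL : 0 < L)
    (Ψ₁ Ψ₂ : ℝ × ℝ → ℂ)
    (hΨ₁ : ContDiffOn ℝ 1 Ψ₁ (Set.Icc (-L) 0 ×ˢ Set.Icc 0 T))
    (hΨ₂ : ContDiffOn ℝ 1 Ψ₂ (Set.Icc (-L) 0 ×ˢ Set.Icc 0 T))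
    (pde₁ : ∀ x ∈ Set.Icc (-L) (0:ℝ), ∀ t ∈ Set.Icc (0:ℝ) T,
        derivWithin (fun s : ℝ => Ψ₁ (x, s)) (Set.Icc 0 T) t
          + derivWithin (fun y : ℝ => Ψ₁ (y, t)) (Set.Icc (-L) 0) x = 0)
    (pde₂ : ∀ x ∈ Set.Icc (-L) (0:ℝ), ∀ t ∈ Set.Icc (0:ℝ) T,
        derivWithin (fun s : ℝ => Ψ₂ (x, s)) (Set.Icc 0 T) t
          - derivWithin (fun y : ℝ => Ψ₂ (y, t)) (Set.Icc (-L) 0) x = 0) :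
    ∀ k : ℂ, ∀ t ∈ Set.Icc (0:ℝ) T,
      ((∫ x in (-L)..(0:ℝ), Complex.exp (-Complex.I * k * x) * Ψ₁ (x, 0))
        + Complex.exp (Complex.I * k * L) *
            (∫ s in (0:ℝ)..t, Complex.exp (Complex.I * k * s) * Ψ₁ (-L, s))
        - Complex.exp (Complex.I * k * t) *
            (∫ x in (-L)..(0:ℝ), Complex.exp (-Complex.I * k * x) * Ψ₁ (x, t))
        - (∫ s in (0:ℝ)..t, Complex.exp (Complex.I * k * s) * Ψ₁ (0, s)) = 0) ∧
      ((∫ x in (-L)..(0:ℝ), Complex.exp (-Complex.I * k * x) * Ψ₂ (x, 0))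
        - Complex.exp (Complex.I * k * L) *
            (∫ s in (0:ℝ)..t, Complex.exp (-Complex.I * k * s) * Ψ₂ (-L, s))
        - Complex.exp (-Complex.I * k * t) *
            (∫ x in (-L)..(0:ℝ), Complex.exp (-Complex.I * k * x) * Ψ₂ (x, t))
        + (∫ s in (0:ℝ)..t, Complex.exp (-Complex.I * k * s) * Ψ₂ (0, s)) = 0) := by
  intro k t ht
  have hL' : -L ≤ 0 := neg_nonpos.2 hL.le
  have h₁ := transport_global_relation_of_derivWithin k 1 hL' ht
    (hΨ₁.differentiableOn one_ne_zero)
    fun x hx s hs => by rw [one_mul]; exact pde₁ x hx s hs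
  have h₂ := transport_global_relation_of_derivWithin k (-1) hL' ht
    (hΨ₂.differentiableOn one_ne_zero)
    fun x hx s hs => by rw [neg_one_mul, ← sub_eq_add_neg]; exact pde₂ x hx s hs
  simp only [one_mul, neg_mul, ofReal_zero, ofReal_neg, mul_zero, mul_neg, neg_neg,
    exp_zero] at h₁ h₂ ⊢
  constructor
  · linear_combination -h₁
  · linear_combination -h₂

/-- Global relations for the massless Dirac system (two decoupled transport equations)
on the rectangle `[-L,0] × [0,T]`, valid for every complex `k`. -/
theorem massless_dirac_global_relations_finite_interval
    (L T : ℝ) (hL : 0 < L) (hT : 0 < T)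
    (Ψ₁ Ψ₂ : ℝ × ℝ → ℂ)
    (hΨ₁ : ContDiffOn ℝ 1 Ψ₁ (Set.Icc (-L) 0 ×ˢ Set.Icc 0 T))
    (hΨ₂ : ContDiffOn ℝ 1 Ψ₂ (Set.Icc (-L) 0 ×ˢ Set.Icc 0 T))
    (pde₁ : ∀ x ∈ Set.Icc (-L) (0:ℝ), ∀ t ∈ Set.Icc (0:ℝ) T,
        derivWithin (fun s : ℝ => Ψ₁ (x, s)) (Set.Icc 0 T) t
          + derivWithin (fun y : ℝ => Ψ₁ (y, t)) (Set.Icc (-L) 0) x = 0)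
    (pde₂ : ∀ x ∈ Set.Icc (-L) (0:ℝ), ∀ t ∈ Set.Icc (0:ℝ) T,
        derivWithin (fun s : ℝ => Ψ₂ (x, s)) (Set.Icc 0 T) t
          - derivWithin (fun y : ℝ => Ψ₂ (y, t)) (Set.Icc (-L) 0) x = 0) :
    ∀ k : ℂ, ∀ t ∈ Set.Icc (0:ℝ) T,
      ((∫ x in (-L)..(0:ℝ), Complex.exp (-Complex.I * k * x) * Ψ₁ (x, 0))
        + Complex.exp (Complex.I * k * L) *
            (∫ s in (0:ℝ)..t, Complex.exp (Complex.I * k * s) * Ψ₁ (-L, s))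
        - Complex.exp (Complex.I * k * t) *
            (∫ x in (-L)..(0:ℝ), Complex.exp (-Complex.I * k * x) * Ψ₁ (x, t))
        - (∫ s in (0:ℝ)..t, Complex.exp (Complex.I * k * s) * Ψ₁ (0, s)) = 0) ∧
      ((∫ x in (-L)..(0:ℝ), Complex.exp (-Complex.I * k * x) * Ψ₂ (x, 0))
        - Complex.exp (Complex.I * k * L) *
            (∫ s in (0:ℝ)..t, Complex.exp (-Complex.I * k * s) * Ψ₂ (-L, s))
        - Complex.exp (-Complex.I * k * t) *
            (∫ x in (-L)..(0:ℝ), Complex.exp (-Complex.I * k * x) * Ψ₂ (x, t))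
        + (∫ s in (0:ℝ)..t, Complex.exp (-Complex.I * k * s) * Ψ₂ (0, s)) = 0) :=
  massless_dirac_global_relations_finite_interval_general L T hL Ψ₁ Ψ₂ hΨ₁ hΨ₂ pde₁ pde₂
end
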